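/- arXiv:1507.06953 — 2 statements merged into one kernel-verified Lean document; each statement's English description precedes it below -/
import Mathlib

section
/- For every n ≥ 1 and every preorder sequence X ∈ S_n, the cost of Greedy on X run without initial tree satisfies Greedy(X) ≤ 4n. -/
open scoped Classical

/-! ### Geometric BST model: point sets, satisfied sets, OPT -/

/-- `r` lies in the closed axis-parallel rectangle with corners `p` and `q`. -/
def InRect {α β : Type*} [LinearOrder α] [LinearOrder β] (p q r : α × β) : Prop :=
  min p.1 q.1 ≤ r.1 ∧ r.1 ≤ max p.1 q.1 ∧ min p.2 q.2 ≤ r.2 ∧ r.2 ≤ max p.2 q.2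

/-- A finite point set is arborally satisfied. -/
def Satisfied {α β : Type*} [LinearOrder α] [LinearOrder β] (P : Finset (α × β)) : Prop :=
  ∀ p ∈ P, ∀ q ∈ P, p.1 ≠ q.1 → p.2 ≠ q.2 → ∃ r ∈ P, r ≠ p ∧ r ≠ q ∧ InRect p q r

/-- `OPT X` : minimum cardinality of an arborally satisfied superset of `X`. -/
noncomputable def OPT {α β : Type*} [LinearOrder α] [LinearOrder β] (X : Finset (α × β)) : ℕ :=
  sInf { m | ∃ Y : Finset (α × β), X ⊆ Y ∧ Satisfied Y ∧ Y.card = m }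

/-! ### Permutations as functions on `[1..n]`, pattern containment -/

/-- `X` is a permutation of `[n] = {1, …, n}`. -/
def IsPermOn (n : ℕ) (X : ℕ → ℕ) : Prop :=
  Set.BijOn X (Set.Icc 1 n) (Set.Icc 1 n)

/-- `X ∈ S_n` contains the pattern `pat ∈ S_k`. -/
def Contains (n : ℕ) (X : ℕ → ℕ) (k : ℕ) (pat : ℕ → ℕ) : Prop :=
  ∃ f : ℕ → ℕ, Set.MapsTo f (Set.Icc 1 k) (Set.Icc 1 n) ∧
    StrictMonoOn f (Set.Icc 1 k) ∧
    ∀ i ∈ Set.Icc 1 k, ∀ j ∈ Set.Icc 1 k, (pat i < pat j ↔ X (f i) < X (f j))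

/-- `X ∈ S_n` avoids the pattern `pat ∈ S_k`. -/
def Avoids (n : ℕ) (X : ℕ → ℕ) (k : ℕ) (pat : ℕ → ℕ) : Prop := ¬ Contains n X k pat

/-- The pattern (2,3,1). -/
def pat231 : ℕ → ℕ := fun i => if i = 1 then 2 else if i = 2 then 3 else if i = 3 then 1 else i

/-- The decreasing pattern (k, k-1, …, 1). -/
def patDec (k : ℕ) : ℕ → ℕ := fun i => k + 1 - i

/-- The increasing pattern (1, 2, …, k). -/
def patInc : ℕ → ℕ := id

/-- The point set `{(X t, t) : t ∈ [n]}` of a permutation of `[n]`. -/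
def permPoints (n : ℕ) (X : ℕ → ℕ) : Finset (ℤ × ℤ) :=
  (Finset.Icc 1 n).image fun t => ((X t : ℤ), (t : ℤ))

/-! ### Binary search trees on `[n]` -/

/-- Binary trees with natural-number keys. -/
inductive BTree where
  | leaf : BTree
  | node : BTree → ℕ → BTree → BTree

def BTree.keys : BTree → Finset ℕ
  | .leaf => ∅
  | .node l k r => insert k (l.keys ∪ r.keys)

def BTree.isSearch : BTree → Prop
  | .leaf => True
  | .node l k r => (∀ y ∈ l.keys, y < k) ∧ (∀ y ∈ r.keys, k < y) ∧ l.isSearch ∧ r.isSearch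

/-- `T` is a binary search tree on `[n] = {1, …, n}`. -/
def IsBSTOn (T : BTree) (n : ℕ) : Prop := T.keys = Finset.Icc 1 n ∧ T.isSearch

/-- Depth of the node labeled `x` (root has depth 1; `0` if `x` is absent). -/
def BTree.depthOf : BTree → ℕ → ℕ
  | .leaf, _ => 0
  | .node l k r, x =>
      if x = k then 1
      else max (if l.depthOf x = 0 then 0 else l.depthOf x + 1)
               (if r.depthOf x = 0 then 0 else r.depthOf x + 1)

/-- Maximum depth of a key of `[n]` in `T`. -/
def BTree.maxDepth (T : BTree) (n : ℕ) : ℕ := (Finset.Icc 1 n).sup T.depthOf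

/-- The geometric encoding of the initial tree `T`:
the stack of points `(x, s)` for `-(d - d_T(x)) ≤ s ≤ 0`. -/
noncomputable def initialSet (T : BTree) (n : ℕ) : Finset (ℕ × ℤ) :=
  (Finset.Icc 1 n).biUnion fun x =>
    (Finset.Icc (-((T.maxDepth n : ℤ) - (T.depthOf x : ℤ))) 0).image fun s => (x, s)

/-! ### Greedy (and its one-sided variants) -/

/-- `tau S b` : last time at which element `b` is touched in the point set `S`
(defaults to `0` if `b` never occurs in `S`). -/
noncomputable def tau (S : Finset (ℕ × ℤ)) (b : ℕ) : ℤ :=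
  WithBot.unbotD 0 ((S.filter (fun p => p.1 = b)).image Prod.snd).max

/-- `tauAt G b t` : last time `≤ t` at which element `b` is touched in the point set `G`. -/
noncomputable def tauAt (G : Finset (ℕ × ℤ)) (b : ℕ) (t : ℤ) : ℤ :=
  WithBot.unbotD 0 ((G.filter (fun p => p.1 = b ∧ p.2 ≤ t)).image Prod.snd).max

/-- The closed rectangle with corners `p` and `q` contains no point of `S`
other than (possibly) `p` and `q`. -/
def RectEmpty (S : Finset (ℕ × ℤ)) (p q : ℕ × ℤ) : Prop :=
  ∀ r ∈ S, InRect p q r → r = p ∨ r = q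

/-- One step of (one-sided) Greedy: access element `a` at time `t`, starting from point set `S`.
`side a b` restricts which elements may be touched (`fun _ _ => True` for plain Greedy,
`fun a b => a < b` for GreedyRight, `fun a b => b < a` for GreedyLeft). -/
noncomputable def greedyStep (n : ℕ) (side : ℕ → ℕ → Prop) (S : Finset (ℕ × ℤ))
    (a : ℕ) (t : ℤ) : Finset (ℕ × ℤ) :=
  insert (a, t) (S ∪
    ((Finset.Icc 1 n).filter (fun b => side a b ∧
        (S.filter (fun p => p.1 = b)).Nonempty ∧
        RectEmpty S (a, t) (b, tau S b))).image (fun b => (b, t)))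

/-- The full output of (one-sided) Greedy on `X` at times `1, …, n`,
starting from the point set `init`. -/
noncomputable def greedyRun (n : ℕ) (side : ℕ → ℕ → Prop) (X : ℕ → ℕ)
    (init : Finset (ℕ × ℤ)) : Finset (ℕ × ℤ) :=
  (List.range n).foldl (fun S t => greedyStep n side S (X (t + 1)) ((t : ℤ) + 1)) init

/-- Cost of Greedy on permutation `X` of `[n]` with initial tree `T`:
the number of points of the output at times `≥ 1`. -/
noncomputable def greedyCostT (T : BTree) (n : ℕ) (X : ℕ → ℕ) : ℕ :=
  ((greedyRun n (fun _ _ => True) X (initialSet T n)).filter (fun p => 1 ≤ p.2)).card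

/-- Cost of Greedy on permutation `X` of `[n]` run without initial tree. -/
noncomputable def greedyCost (n : ℕ) (X : ℕ → ℕ) : ℕ :=
  (greedyRun n (fun _ _ => True) X ∅).card

/-- Cost of Signed Greedy on permutation `X` of `[n]` with initial tree `T`:
cardinality of the union of the GreedyLeft and GreedyRight outputs at times `≥ 1`. -/
noncomputable def sgreedyCostT (T : BTree) (n : ℕ) (X : ℕ → ℕ) : ℕ :=
  ((greedyRun n (fun a b => b < a) X (initialSet T n) ∪
      greedyRun n (fun a b => a < b) X (initialSet T n)).filter (fun p => 1 ≤ p.2)).card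

/-! ### Inverse Ackermann -/

/-- The inverse Ackermann function `α(n) = min {m : A(m,m) ≥ n}`. -/
noncomputable def invAck (n : ℕ) : ℕ := sInf { m | n ≤ ack m m }

/-! ### Blocks, simple permutations, `k`-decomposability -/

/-- `[a,b]` is a block of the permutation `X` of `[n]`:
a contiguous interval of positions mapped onto a contiguous interval of values. -/
def IsBlockOf (n : ℕ) (X : ℕ → ℕ) (a b : ℕ) : Prop :=
  1 ≤ a ∧ a ≤ b ∧ b ≤ n ∧ ∃ c : ℕ, X '' Set.Icc a b = Set.Icc c (c + (b - a))

/-- A permutation of `[l]` is simple (non-decomposable): it has no block of size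
strictly between `1` and `l`. -/
def IsSimplePerm (l : ℕ) (σ : ℕ → ℕ) : Prop :=
  ∀ a b : ℕ, IsBlockOf l σ a b → a = b ∨ (a = 1 ∧ b = l)

/-- The permutation of `[b - a + 1]` order-isomorphic to the restriction of `X`
to the block `[a, b]`. -/
noncomputable def blockRestrict (X : ℕ → ℕ) (a b : ℕ) : ℕ → ℕ :=
  fun j => X (a + j - 1) + 1 - sInf (X '' Set.Icc a b)

/-- `X ∈ S_n` is `k`-decomposable: `n = 1`, or `[n]` can be partitioned into at least 2
and at most `k` consecutive intervals, each a block of `X`, such that the permutation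
order-isomorphic to the restriction of `X` to each block is again `k`-decomposable. -/
inductive KDecomposable (k : ℕ) : ℕ → (ℕ → ℕ) → Prop where
  | base : ∀ X : ℕ → ℕ, KDecomposable k 1 X
  | step : ∀ (n : ℕ) (X : ℕ → ℕ) (m : ℕ) (c : ℕ → ℕ),
      2 ≤ m → m ≤ k → c 0 = 1 → c m = n + 1 →
      (∀ i < m, c i < c (i + 1)) →
      (∀ i < m, IsBlockOf n X (c i) (c (i + 1) - 1)) →
      (∀ i < m, KDecomposable k (c (i + 1) - c i) (blockRestrict X (c i) (c (i + 1) - 1))) →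
      KDecomposable k n X


/-! ### Auxiliary development -/

section Aux

open Finset

/-- basic tau facts -/
lemma le_tau' {S : Finset (ℕ × ℤ)} {b : ℕ} {s : ℤ} (h : (b, s) ∈ S) : s ≤ tau S b := by
  classical
  have hmem : s ∈ (S.filter (fun p => p.1 = b)).image Prod.snd := by
    refine Finset.mem_image.2 ⟨(b, s), ?_, rfl⟩
    exact Finset.mem_filter.2 ⟨h, rfl⟩
  have hle := Finset.le_max hmem
  unfold tau
  cases hmax : ((S.filter (fun p => p.1 = b)).image Prod.snd).max with
  | bot => rw [hmax] at hle; exact absurd hle (by simp)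
  | coe m => rw [hmax] at hle; simpa using hle

lemma tau_mem' {S : Finset (ℕ × ℤ)} {b : ℕ}
    (h : (S.filter (fun p => p.1 = b)).Nonempty) : (b, tau S b) ∈ S := by
  classical
  have himg : ((S.filter (fun p => p.1 = b)).image Prod.snd).Nonempty := h.image _
  obtain ⟨m, hm⟩ := Finset.max_of_nonempty himg
  have hmem := Finset.mem_of_max hm
  obtain ⟨p, hp, hps⟩ := Finset.mem_image.1 hmem
  obtain ⟨hpS, hpb⟩ := Finset.mem_filter.1 hp
  have : tau S b = m := by unfold tau; rw [hm]; rfl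
  rw [this]
  have : p = (b, m) := by
    cases p; simp_all
  rwa [this] at hpS

lemma tau_le' {S : Finset (ℕ × ℤ)} {b : ℕ} {m : ℤ} (h0 : 0 ≤ m)
    (h : ∀ p ∈ S, p.1 = b → p.2 ≤ m) : tau S b ≤ m := by
  classical
  unfold tau
  cases hmax : ((S.filter (fun p => p.1 = b)).image Prod.snd).max with
  | bot => simpa using h0
  | coe m' =>
    have hmem := Finset.mem_of_max hmax
    obtain ⟨p, hp, hps⟩ := Finset.mem_image.1 hmem
    obtain ⟨hpS, hpb⟩ := Finset.mem_filter.1 hp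
    have := h p hpS hpb
    rw [hps] at this
    simpa using this

end Aux

section GS

/-- The greedy state after `t` steps. -/
noncomputable def gS (n : ℕ) (X : ℕ → ℕ) : ℕ → Finset (ℕ × ℤ)
  | 0 => ∅
  | t + 1 => greedyStep n (fun _ _ => True) (gS n X t) (X (t + 1)) ((t + 1 : ℕ) : ℤ)

lemma greedyRun_eq_gS (n : ℕ) (X : ℕ → ℕ) :
    greedyRun n (fun _ _ => True) X ∅ = gS n X n := by
  suffices h : ∀ m : ℕ,
      (List.range m).foldl (fun S t => greedyStep n (fun _ _ => True) S (X (t + 1)) ((t : ℤ) + 1)) ∅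
        = gS n X m by
    exact h n
  intro m
  induction m with
  | zero => rfl
  | succ m ih =>
    rw [List.range_succ, List.foldl_append, ih]
    have hcast : ((m : ℤ) + 1) = ((m + 1 : ℕ) : ℤ) := by push_cast; ring
    simp only [List.foldl_cons, List.foldl_nil, hcast]
    rfl

/-- Membership in a greedy step. -/
lemma mem_greedyStep {n : ℕ} {side : ℕ → ℕ → Prop} {S : Finset (ℕ × ℤ)} {a : ℕ} {t : ℤ}
    {p : ℕ × ℤ} :
    p ∈ greedyStep n side S a t ↔
      p = (a, t) ∨ p ∈ S ∨
        ∃ b, b ∈ Finset.Icc 1 n ∧ side a b ∧ (S.filter (fun q => q.1 = b)).Nonempty ∧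
          RectEmpty S (a, t) (b, tau S b) ∧ p = (b, t) := by
  classical
  simp only [greedyStep, Finset.mem_insert, Finset.mem_union, Finset.mem_image,
    Finset.mem_filter]
  constructor
  · rintro (h | h | ⟨b, ⟨hb, h1, h2, h3⟩, hp⟩)
    · exact Or.inl h
    · exact Or.inr (Or.inl h)
    · exact Or.inr (Or.inr ⟨b, hb, h1, h2, h3, hp.symm⟩)
  · rintro (h | h | ⟨b, hb, h1, h2, h3, hp⟩)
    · exact Or.inl h
    · exact Or.inr (Or.inl h)
    · exact Or.inr (Or.inr ⟨b, ⟨hb, h1, h2, h3⟩, hp.symm⟩)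

variable {n : ℕ} {X : ℕ → ℕ}

lemma gS_subset_succ (t : ℕ) : gS n X t ⊆ gS n X (t + 1) := by
  intro p hp
  exact mem_greedyStep.2 (Or.inr (Or.inl hp))

lemma gS_mono {s t : ℕ} (h : s ≤ t) : gS n X s ⊆ gS n X t := by
  induction t with
  | zero => simpa [Nat.le_zero.1 h]
  | succ t ih =>
    rcases Nat.lt_or_ge s (t + 1) with h' | h'
    · exact (ih (Nat.lt_succ_iff.1 h')).trans (gS_subset_succ t)
    · have : s = t + 1 := le_antisymm h h'
      subst this; exact subset_rfl

lemma gS_time_bounds {t : ℕ} {p : ℕ × ℤ} (hp : p ∈ gS n X t) :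
    1 ≤ p.2 ∧ p.2 ≤ (t : ℤ) := by
  induction t generalizing p with
  | zero => simp [gS] at hp
  | succ t ih =>
    rcases mem_greedyStep.1 hp with h | h | ⟨b, _, _, _, _, h⟩
    · subst h; constructor <;> simp
    · obtain ⟨h1, h2⟩ := ih h
      exact ⟨h1, h2.trans (by push_cast; omega)⟩
    · subst h; constructor <;> simp

/-- Every column that appears was accessed. -/
lemma gS_accessed {t : ℕ} {p : ℕ × ℤ} (hp : p ∈ gS n X t) :
    ∃ s : ℕ, 1 ≤ s ∧ s ≤ t ∧ X s = p.1 := by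
  induction t generalizing p with
  | zero => simp [gS] at hp
  | succ t ih =>
    rcases mem_greedyStep.1 hp with h | h | ⟨b, _, _, hne, _, h⟩
    · subst h; exact ⟨t + 1, by omega, le_refl _, rfl⟩
    · obtain ⟨s, h1, h2, h3⟩ := ih h
      exact ⟨s, h1, h2.trans (Nat.le_succ t), h3⟩
    · subst h
      obtain ⟨q, hq⟩ := hne
      obtain ⟨hqS, hqb⟩ := Finset.mem_filter.1 hq
      obtain ⟨s, h1, h2, h3⟩ := ih hqS
      exact ⟨s, h1, h2.trans (Nat.le_succ t), by rw [h3, hqb]⟩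

end GS

section GS2

variable {n : ℕ} {X : ℕ → ℕ}

lemma mem_gS_of_time_le {t : ℕ} {p : ℕ × ℤ} (hp : p ∈ gS n X (t + 1))
    (h : p.2 ≤ (t : ℤ)) : p ∈ gS n X t := by
  rcases mem_greedyStep.1 hp with h' | h' | ⟨b, _, _, _, _, h'⟩
  · subst h'; simp at h
  · exact h'
  · subst h'; simp at h

lemma mem_gS_time {s t : ℕ} {p : ℕ × ℤ} (h : s ≤ t) (hp : p ∈ gS n X t)
    (ht : p.2 ≤ (s : ℤ)) : p ∈ gS n X s := by
  induction t with
  | zero => simpa [Nat.le_zero.1 h] using hp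
  | succ t ih =>
    rcases Nat.lt_or_ge s (t + 1) with h' | h'
    · have hs : s ≤ t := Nat.lt_succ_iff.1 h'
      exact ih hs (mem_gS_of_time_le hp (ht.trans (by exact_mod_cast Nat.cast_le.2 hs)))
    · have : s = t + 1 := le_antisymm h h'
      subst this; exact hp

/-- If `b` appears at time `t+1` but is not the accessed element,
its column was nonempty before and the greedy rectangle was empty. -/
lemma touched_side {t : ℕ} {w : ℕ}
    (hw : (w, ((t + 1 : ℕ) : ℤ)) ∈ gS n X (t + 1)) (hne : w ≠ X (t + 1)) :
    w ∈ Finset.Icc 1 n ∧ ((gS n X t).filter (fun q => q.1 = w)).Nonempty ∧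
      RectEmpty (gS n X t) (X (t + 1), ((t + 1 : ℕ) : ℤ)) (w, tau (gS n X t) w) := by
  rcases mem_greedyStep.1 hw with h' | h' | ⟨b, hb, _, h1, h2, h'⟩
  · exact absurd (congrArg Prod.fst h') hne
  · have := (gS_time_bounds h').2
    simp at this
  · have hbw : w = b := congrArg Prod.fst h'
    subst hbw
    exact ⟨hb, h1, h2⟩

/-- The access point is present. -/
lemma access_mem (t : ℕ) : (X (t + 1), ((t + 1 : ℕ) : ℤ)) ∈ gS n X (t + 1) :=
  mem_greedyStep.2 (Or.inl rfl)

/-- Column nonempty before the step, for non-accessed elements present at step `t+1`. -/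
lemma col_nonempty_of_ne {t : ℕ} {b : ℕ} {s : ℤ} (hb : (b, s) ∈ gS n X (t + 1))
    (hne : b ≠ X (t + 1)) : ((gS n X t).filter (fun q => q.1 = b)).Nonempty := by
  rcases mem_greedyStep.1 hb with h' | h' | ⟨b', _, _, h1, _, h'⟩
  · exact absurd (congrArg Prod.fst h') hne
  · exact ⟨(b, s), Finset.mem_filter.2 ⟨h', rfl⟩⟩
  · have hb' : b = b' := congrArg Prod.fst h'
    subst hb'; exact h1

/-- If `w` is not touched at time `t+1`, its `tau` is unchanged. -/
lemma tau_succ_of_not_touched {t : ℕ} {w : ℕ}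
    (h : (w, ((t + 1 : ℕ) : ℤ)) ∉ gS n X (t + 1)) :
    tau (gS n X (t + 1)) w = tau (gS n X t) w := by
  have hfe : (gS n X (t + 1)).filter (fun q => q.1 = w)
      = (gS n X t).filter (fun q => q.1 = w) := by
    apply Finset.ext
    intro q
    simp only [Finset.mem_filter]
    constructor
    · rintro ⟨hq, hq1⟩
      refine ⟨?_, hq1⟩
      rcases Int.lt_or_le (t : ℤ) q.2 with h' | h'
      · exfalso
        have hb := gS_time_bounds hq
        have : q.2 = ((t + 1 : ℕ) : ℤ) := by push_cast at hb ⊢; omega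
        have : q = (w, ((t + 1 : ℕ) : ℤ)) := by
          cases q; simp_all
        rw [this] at hq; exact h hq
      · exact mem_gS_of_time_le hq h'
    · rintro ⟨hq, hq1⟩
      exact ⟨gS_subset_succ t hq, hq1⟩
  unfold tau
  rw [hfe]

/-- tau is at most the current time. -/
lemma tau_le_time {t : ℕ} (b : ℕ) : tau (gS n X t) b ≤ (t : ℤ) :=
  tau_le' (by positivity) (fun p hp _ => (gS_time_bounds hp).2)

end GS2

section Avoid

variable {n : ℕ} {X : ℕ → ℕ}

/-- The key consequence of 231-avoidance: no mid–big–small triple. -/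
lemma l1 (hA : Avoids n X 3 pat231) {s t t' : ℕ} (h1 : 1 ≤ s) (h2 : s < t)
    (h3 : t < t') (h4 : t' ≤ n) (h5 : X s < X t) (h6 : X t' < X s) : False := by
  apply hA
  refine ⟨fun i => if i = 1 then s else if i = 2 then t else t', ?_, ?_, ?_⟩
  · intro i hi
    obtain ⟨hi1, hi2⟩ := hi
    interval_cases i <;> simp <;> constructor <;> omega
  · intro i hi j hj hij
    obtain ⟨hi1, hi2⟩ := hi
    obtain ⟨hj1, hj2⟩ := hj
    interval_cases i <;> interval_cases j <;> simp <;> omega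
  · intro i hi j hj
    obtain ⟨hi1, hi2⟩ := hi
    obtain ⟨hj1, hj2⟩ := hj
    interval_cases i <;> interval_cases j <;> simp [pat231] <;> omega

/-- Once `u` has been accessed, all accesses strictly before a future access
below `u` are themselves below `u`. -/
lemma access_lt (hX : IsPermOn n X) (hA : Avoids n X 3 pat231) {s t t' : ℕ}
    (h1 : 1 ≤ s) (h2 : s < t) (h3 : t < t') (h4 : t' ≤ n) (h6 : X t' < X s) :
    X t < X s := by
  rcases lt_trichotomy (X t) (X s) with h | h | h
  · exact h
  · exfalso
    have := hX.injOn (Set.mem_Icc.2 ⟨by omega, by omega⟩) (Set.mem_Icc.2 ⟨by omega, by omega⟩) h.symm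
    omega
  · exact absurd (l1 hA h1 h2 h3 h4 h h6) (fun hf => hf)

end Avoid

section Invariant

variable {n : ℕ} {X : ℕ → ℕ}

/-- **Invariant (I)**: at any time `t`, if a future access goes below `u`, then among
columns above the future access, `tau` is antitone: `u < w ⇒ tau w ≤ tau u`. -/
lemma invariantI (hX : IsPermOn n X) (hA : Avoids n X 3 pat231) :
    ∀ t : ℕ, ∀ u w t' : ℕ,
      ((gS n X t).filter (fun q => q.1 = u)).Nonempty →
      ((gS n X t).filter (fun q => q.1 = w)).Nonempty →
      u < w → t < t' → t' ≤ n → X t' < u →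
      tau (gS n X t) w ≤ tau (gS n X t) u := by
  intro t
  induction t with
  | zero =>
    intro u w t' hu _ _ _ _ _
    exfalso
    obtain ⟨q, hq⟩ := hu
    have := (Finset.mem_filter.1 hq).1
    simp [gS] at this
  | succ t ih =>
    intro u w t' hu hw huw htt' ht'n hXt'
    by_cases hua : u = X (t + 1)
    · have h1 : ((t + 1 : ℕ) : ℤ) ≤ tau (gS n X (t + 1)) u := by
        apply le_tau'
        rw [hua]
        exact access_mem t
      exact (tau_le_time w).trans h1
    · -- u was accessed before time t+1
      have hcolu : ((gS n X t).filter (fun q => q.1 = u)).Nonempty := by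
        obtain ⟨q, hq⟩ := hu
        obtain ⟨hq1, hq2⟩ := Finset.mem_filter.1 hq
        obtain ⟨q1, q2⟩ := q
        simp only at hq2
        subst hq2
        exact col_nonempty_of_ne hq1 hua
      have hmemu : (u, tau (gS n X t) u) ∈ gS n X t := tau_mem' hcolu
      obtain ⟨su, hsu1, hsu2, hsu3⟩ := gS_accessed hmemu
      -- a < u
      have hau : X (t + 1) < u := by
        rcases Nat.lt_or_ge (t + 1) t' with h' | h'
        · have := access_lt hX hA hsu1 (by omega : su < t + 1) h' ht'n (by rw [hsu3]; exact hXt')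
          rwa [hsu3] at this
        · have : t' = t + 1 := by omega
          subst this
          exact hXt'
      have hwa : w ≠ X (t + 1) := by omega
      have hcolw : ((gS n X t).filter (fun q => q.1 = w)).Nonempty := by
        obtain ⟨q, hq⟩ := hw
        obtain ⟨hq1, hq2⟩ := Finset.mem_filter.1 hq
        obtain ⟨q1, q2⟩ := q
        simp only at hq2
        subst hq2
        exact col_nonempty_of_ne hq1 hwa
      have IH := ih u w t' hcolu hcolw huw (by omega) ht'n hXt'
      by_cases htw : (w, ((t + 1 : ℕ) : ℤ)) ∈ gS n X (t + 1)
      · exfalso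
        obtain ⟨_, _, hrect⟩ := touched_side htw hwa
        have hblock := hrect (u, tau (gS n X t) u) hmemu ?_
        · rcases hblock with h | h
          · exact hua (congrArg Prod.fst h)
          · exact absurd (congrArg Prod.fst h) (by omega)
        · refine ⟨?_, ?_, ?_, ?_⟩
          · exact (min_le_left _ _).trans (le_of_lt hau)
          · exact le_of_lt (lt_of_lt_of_le huw (le_max_right _ _))
          · exact (min_le_right _ _).trans IH
          · refine (tau_le_time (n := n) (X := X) (t := t) u).trans ?_
            refine le_trans ?_ (le_max_left _ _)
            push_cast; omega
      · rw [tau_succ_of_not_touched htw]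
        exact IH.trans (le_tau' (gS_subset_succ t hmemu))

end Invariant

section LemA

variable {n : ℕ} {X : ℕ → ℕ}

lemma above_not_lt (hX : IsPermOn n X) (hA : Avoids n X 3 pat231) {t : ℕ}
    (ht1 : 1 ≤ t) (htn : t ≤ n) {b1 b2 : ℕ}
    (h1 : (b1, (t : ℤ)) ∈ gS n X t) (h2 : (b2, (t : ℤ)) ∈ gS n X t)
    (ha1 : X t < b1) (hlt : b1 < b2) : False := by
  obtain ⟨t0, rfl⟩ : ∃ t0, t = t0 + 1 := ⟨t - 1, by omega⟩
  have ha2 : X (t0 + 1) < b2 := by omega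
  have hne1 : b1 ≠ X (t0 + 1) := by omega
  have hne2 : b2 ≠ X (t0 + 1) := by omega
  obtain ⟨_, hcol2, hrect⟩ := touched_side h2 hne2
  have hcol1 : ((gS n X t0).filter (fun q => q.1 = b1)).Nonempty :=
    col_nonempty_of_ne h1 hne1
  have hI := invariantI hX hA t0 b1 b2 (t0 + 1) hcol1 hcol2 hlt (by omega) htn ha1
  have hmem1 : (b1, tau (gS n X t0) b1) ∈ gS n X t0 := tau_mem' hcol1
  have hblock := hrect (b1, tau (gS n X t0) b1) hmem1 ?_
  · rcases hblock with h | h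
    · exact absurd (congrArg Prod.fst h) (by omega)
    · exact absurd (congrArg Prod.fst h) (by omega)
  · refine ⟨?_, ?_, ?_, ?_⟩
    · exact (min_le_left _ _).trans (le_of_lt ha1)
    · exact le_of_lt (lt_of_lt_of_le hlt (le_max_right _ _))
    · exact (min_le_right _ _).trans hI
    · refine (tau_le_time (n := n) (X := X) (t := t0) b1).trans ?_
      refine le_trans ?_ (le_max_left _ _)
      push_cast; omega

/-- **Lemma (A)**: at most one element above the access is touched at any time. -/
lemma above_unique (hX : IsPermOn n X) (hA : Avoids n X 3 pat231) {t : ℕ}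
    (ht1 : 1 ≤ t) (htn : t ≤ n) {b1 b2 : ℕ}
    (h1 : (b1, (t : ℤ)) ∈ gS n X t) (h2 : (b2, (t : ℤ)) ∈ gS n X t)
    (ha1 : X t < b1) (ha2 : X t < b2) : b1 = b2 := by
  rcases lt_trichotomy b1 b2 with h | h | h
  · exact absurd (above_not_lt hX hA ht1 htn h1 h2 ha1 h) (fun hf => hf)
  · exact h
  · exact absurd (above_not_lt hX hA ht1 htn h2 h1 ha2 h) (fun hf => hf)

end LemA

section LemB

variable {n : ℕ} {X : ℕ → ℕ}

/-- **Lemma (B)**: if `b < b'` are both touched at time `t` strictly below the access,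
then `b` is never touched again. -/
lemma below_dead (hX : IsPermOn n X) (hA : Avoids n X 3 pat231) {t : ℕ}
    (ht1 : 1 ≤ t) (htn : t ≤ n) {b b' : ℕ}
    (hb : (b, (t : ℤ)) ∈ gS n X n) (hb' : (b', (t : ℤ)) ∈ gS n X n)
    (hbb' : b < b') (hb'a : b' < X t) :
    ∀ t'' : ℕ, t < t'' → (b, (t'' : ℤ)) ∉ gS n X n := by
  intro t''
  induction t'' using Nat.strong_induction_on with
  | _ t'' ih =>
  intro htt'' hmem
  have hbd := gS_time_bounds hmem
  have ht''n : t'' ≤ n := by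
    have := hbd.2
    simp only at this
    exact_mod_cast this
  have hbt : (b, (t : ℤ)) ∈ gS n X t := mem_gS_time htn hb (le_refl _)
  have hb't : (b', (t : ℤ)) ∈ gS n X t := mem_gS_time htn hb' (le_refl _)
  have hmem'' : (b, (t'' : ℤ)) ∈ gS n X t'' := mem_gS_time ht''n hmem (le_refl _)
  obtain ⟨sb, hsb1, hsb2, hsb3⟩ := gS_accessed hbt
  obtain ⟨t1, rfl⟩ : ∃ t1, t = t1 + 1 := ⟨t - 1, by omega⟩
  have hb'col : ((gS n X t1).filter (fun q => q.1 = b')).Nonempty :=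
    col_nonempty_of_ne hb't (by omega)
  obtain ⟨q', hq'⟩ := hb'col
  obtain ⟨s', hs'1, hs'2, hs'3⟩ := gS_accessed (Finset.mem_filter.1 hq').1
  have hs'b' : X s' = b' := by rw [hs'3, (Finset.mem_filter.1 hq').2]
  by_cases hbacc : b = X t''
  · have heq : X sb = X t'' := by rw [hsb3, hbacc]
    have hm1 : sb ∈ Set.Icc 1 n := Set.mem_Icc.2 ⟨hsb1, by omega⟩
    have hm2 : t'' ∈ Set.Icc 1 n := Set.mem_Icc.2 ⟨by omega, ht''n⟩
    have := hX.injOn hm1 hm2 heq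
    omega
  obtain ⟨t2, rfl⟩ : ∃ t2, t'' = t2 + 1 := ⟨t'' - 1, by omega⟩
  obtain ⟨_, hbcol'', hrect⟩ := touched_side hmem'' (fun h => hbacc h)
  rcases lt_trichotomy (X (t2 + 1)) b with hc | hc | hc
  · -- future access below b : 231 pattern (b', X t, X t'')
    exact l1 hA (s := s') (t := t1 + 1) (t' := t2 + 1) hs'1 (by omega) (by omega) ht''n
      (by rw [hs'b']; exact hb'a) (by rw [hs'b']; omega)
  · exact hbacc hc.symm
  · rcases lt_trichotomy b' (X (t2 + 1)) with hd | hd | hd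
    · -- b' blocks the rectangle
      have htaub : tau (gS n X t2) b ≤ ((t1 + 1 : ℕ) : ℤ) := by
        apply tau_le' (by positivity)
        intro p hp hp1
        by_contra hgt
        push_neg at hgt
        have hbd2 := gS_time_bounds hp
        set sN := p.2.toNat with hsN
        have hp2 : ((sN : ℕ) : ℤ) = p.2 := Int.toNat_of_nonneg (by omega)
        have hdead := ih sN (by omega) (by omega)
        apply hdead
        have hpe : p = (b, ((sN : ℕ) : ℤ)) := Prod.ext hp1 hp2.symm
        exact gS_mono (by omega : t2 ≤ n) (hpe ▸ hp)
      have hb'col2 : (b', ((t1 + 1 : ℕ) : ℤ)) ∈ gS n X t2 :=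
        gS_mono (by omega : t1 + 1 ≤ t2) hb't
      have htaub' : ((t1 + 1 : ℕ) : ℤ) ≤ tau (gS n X t2) b' := le_tau' hb'col2
      have hb'colne : ((gS n X t2).filter (fun q => q.1 = b')).Nonempty :=
        ⟨(b', ((t1 + 1 : ℕ) : ℤ)), Finset.mem_filter.2 ⟨hb'col2, rfl⟩⟩
      have hmemb' : (b', tau (gS n X t2) b') ∈ gS n X t2 := tau_mem' hb'colne
      have hblock := hrect (b', tau (gS n X t2) b') hmemb' ?_
      · rcases hblock with h | h
        · exact absurd (congrArg Prod.fst h) (by omega)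
        · exact absurd (congrArg Prod.fst h) (by omega)
      · refine ⟨?_, ?_, ?_, ?_⟩
        · exact (min_le_right _ _).trans (le_of_lt hbb')
        · exact le_of_lt (lt_of_lt_of_le hd (le_max_left _ _))
        · exact (min_le_right _ _).trans (htaub.trans htaub')
        · refine (tau_le_time (n := n) (X := X) (t := t2) b').trans ?_
          refine le_trans ?_ (le_max_left _ _)
          push_cast; omega
    · have heq : X s' = X (t2 + 1) := by rw [hs'b', hd]
      have hm1 : s' ∈ Set.Icc 1 n := Set.mem_Icc.2 ⟨hs'1, by omega⟩
      have hm2 : t2 + 1 ∈ Set.Icc 1 n := Set.mem_Icc.2 ⟨by omega, ht''n⟩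
      have := hX.injOn hm1 hm2 heq
      omega
    · -- access between b and b' : 231 pattern
      exact l1 hA (s := s') (t := t1 + 1) (t' := t2 + 1) hs'1 (by omega) (by omega) ht''n
        (by rw [hs'b']; exact hb'a) (by rw [hs'b']; omega)

end LemB

section Final

variable {n : ℕ} {X : ℕ → ℕ}

lemma gS_mem_own {p : ℕ × ℤ} (hp : p ∈ gS n X n) :
    1 ≤ p.2.toNat ∧ p.2.toNat ≤ n ∧ p.2 = ((p.2.toNat : ℕ) : ℤ) ∧
      (p.1, ((p.2.toNat : ℕ) : ℤ)) ∈ gS n X p.2.toNat := by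
  have hbd := gS_time_bounds hp
  have h2 : p.2 = ((p.2.toNat : ℕ) : ℤ) := (Int.toNat_of_nonneg (by omega)).symm
  have h1 : 1 ≤ p.2.toNat := by omega
  have h3 : p.2.toNat ≤ n := by omega
  refine ⟨h1, h3, h2, ?_⟩
  have hpe : p = (p.1, ((p.2.toNat : ℕ) : ℤ)) := Prod.ext rfl h2
  exact mem_gS_time h3 (hpe ▸ hp) (le_refl _)

end Final

/-- For every `n ≥ 1` and every preorder sequence `X ∈ S_n`,
Greedy without initial tree has cost at most `4n`. -/
theorem greedy_preorder_linear :
    ∀ n : ℕ, 1 ≤ n → ∀ X : ℕ → ℕ, IsPermOn n X → Avoids n X 3 pat231 →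
      greedyCost n X ≤ 4 * n := by
  intro n hn X hX hA
  classical
  unfold greedyCost
  rw [greedyRun_eq_gS]
  set G := gS n X n with hG
  set A1 := (Finset.Icc 1 n).image (fun t => (X t, (t : ℤ))) with hA1
  set Ab := G.filter (fun p => X p.2.toNat < p.1) with hAb
  set Tb := G.filter (fun p => p.1 < X p.2.toNat ∧
      ∀ q ∈ G, q.2 = p.2 → q.1 < X p.2.toNat → q.1 ≤ p.1) with hTb
  set Nb := G.filter (fun p => p.1 < X p.2.toNat ∧
      ∃ q ∈ G, q.2 = p.2 ∧ p.1 < q.1 ∧ q.1 < X p.2.toNat) with hNb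
  have hsub : G ⊆ A1 ∪ (Ab ∪ (Tb ∪ Nb)) := by
    intro p hp
    obtain ⟨h1, h3, h2, hpown⟩ := gS_mem_own hp
    rcases lt_trichotomy p.1 (X p.2.toNat) with hlt | heq | hgt
    · by_cases htop : ∀ q ∈ G, q.2 = p.2 → q.1 < X p.2.toNat → q.1 ≤ p.1
      · exact Finset.mem_union_right _ (Finset.mem_union_right _ (Finset.mem_union_left _
          (Finset.mem_filter.2 ⟨hp, hlt, htop⟩)))
      · push_neg at htop
        obtain ⟨q, hq1, hq2, hq3, hq4⟩ := htop
        exact Finset.mem_union_right _ (Finset.mem_union_right _ (Finset.mem_union_right _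
          (Finset.mem_filter.2 ⟨hp, hlt, q, hq1, hq2, hq4, hq3⟩)))
    · refine Finset.mem_union_left _ (Finset.mem_image.2 ⟨p.2.toNat,
        Finset.mem_Icc.2 ⟨h1, h3⟩, ?_⟩)
      exact Prod.ext heq.symm h2.symm
    · exact Finset.mem_union_right _ (Finset.mem_union_left _ (Finset.mem_filter.2 ⟨hp, hgt⟩))
  have hA1card : A1.card ≤ n := by
    refine Finset.card_image_le.trans ?_
    simp
  have hAbcard : Ab.card ≤ n := by
    have hle := Finset.card_le_card_of_injOn (f := fun p : ℕ × ℤ => p.2.toNat)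
      (s := Ab) (t := Finset.Icc 1 n) ?_ ?_
    · simpa using hle
    · intro p hp
      obtain ⟨hpG, _⟩ := Finset.mem_filter.1 hp
      obtain ⟨h1, h3, _, _⟩ := gS_mem_own hpG
      exact Finset.mem_Icc.2 ⟨h1, h3⟩
    · intro p hp q hq hfe
      simp only [Finset.mem_coe] at hp hq
      obtain ⟨hpG, hpa⟩ := Finset.mem_filter.1 hp
      obtain ⟨hqG, hqa⟩ := Finset.mem_filter.1 hq
      obtain ⟨hp1, hp3, hp2, hpown⟩ := gS_mem_own hpG
      obtain ⟨hq1, hq3, hq2, hqown⟩ := gS_mem_own hqG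
      simp only at hfe
      have htime : p.2 = q.2 := by rw [hp2, hq2, hfe]
      have hqown' : (q.1, ((p.2.toNat : ℕ) : ℤ)) ∈ gS n X p.2.toNat := by
        rw [hfe]; exact hqown
      have hqa' : X p.2.toNat < q.1 := by rw [hfe]; exact hqa
      have := above_unique hX hA hp1 hp3 hpown hqown' hpa hqa'
      exact Prod.ext this htime
  have hTbcard : Tb.card ≤ n := by
    have hle := Finset.card_le_card_of_injOn (f := fun p : ℕ × ℤ => p.2.toNat)
      (s := Tb) (t := Finset.Icc 1 n) ?_ ?_
    · simpa using hle
    · intro p hp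
      obtain ⟨hpG, _⟩ := Finset.mem_filter.1 hp
      obtain ⟨h1, h3, _, _⟩ := gS_mem_own hpG
      exact Finset.mem_Icc.2 ⟨h1, h3⟩
    · intro p hp q hq hfe
      simp only [Finset.mem_coe] at hp hq
      obtain ⟨hpG, hpa, hptop⟩ := Finset.mem_filter.1 hp
      obtain ⟨hqG, hqa, hqtop⟩ := Finset.mem_filter.1 hq
      obtain ⟨hp1, hp3, hp2, hpown⟩ := gS_mem_own hpG
      obtain ⟨hq1, hq3, hq2, hqown⟩ := gS_mem_own hqG
      simp only at hfe
      have htime : p.2 = q.2 := by rw [hp2, hq2, hfe]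
      have h1 : p.1 ≤ q.1 := hqtop p hpG htime (by rw [← hfe] at hqa ⊢; exact hpa)
      have h2' : q.1 ≤ p.1 := hptop q hqG htime.symm (by rw [hfe] at hpa ⊢; exact hqa)
      exact Prod.ext (le_antisymm h1 h2') htime
  have hNbcard : Nb.card ≤ n := by
    have hdead : ∀ p ∈ Nb, ∀ q ∈ Nb, p.1 = q.1 → p.2 < q.2 → False := by
      intro p hp q hq hfst htime
      obtain ⟨hpG, hpa, q0, hq01, hq02, hq03, hq04⟩ := Finset.mem_filter.1 hp
      obtain ⟨hqG, _, _⟩ := Finset.mem_filter.1 hq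
      obtain ⟨hp1, hp3, hp2, hpown⟩ := gS_mem_own hpG
      obtain ⟨hq1, hq3, hq2, hqown⟩ := gS_mem_own hqG
      have hb : (p.1, ((p.2.toNat : ℕ) : ℤ)) ∈ gS n X n := by
        rw [← hp2]; exact hpG
      have hq0e : q0 = (q0.1, ((p.2.toNat : ℕ) : ℤ)) := Prod.ext rfl (hq02.trans hp2)
      have hb' : (q0.1, ((p.2.toNat : ℕ) : ℤ)) ∈ gS n X n := hq0e ▸ hq01
      have hkill := below_dead hX hA hp1 hp3 hb hb' hq03 hq04 q.2.toNat (by omega)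
      apply hkill
      have hqe : q = (p.1, ((q.2.toNat : ℕ) : ℤ)) := Prod.ext hfst.symm hq2
      exact hqe ▸ hqG
    have hle := Finset.card_le_card_of_injOn (f := fun p : ℕ × ℤ => p.1)
      (s := Nb) (t := Finset.Icc 1 n) ?_ ?_
    · simpa using hle
    · intro p hp
      obtain ⟨hpG, _⟩ := Finset.mem_filter.1 hp
      obtain ⟨s, hs1, hs2, hs3⟩ := gS_accessed hpG
      have := hX.mapsTo (Set.mem_Icc.2 ⟨hs1, hs2⟩)
      rw [hs3] at this
      exact Finset.mem_Icc.2 (Set.mem_Icc.1 this)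
    · intro p hp q hq hfe
      simp only [Finset.mem_coe] at hp hq
      simp only at hfe
      rcases lt_trichotomy p.2 q.2 with h | h | h
      · exact absurd (hdead p hp q hq hfe h) (fun hf => hf)
      · exact Prod.ext hfe h
      · exact absurd (hdead q hq p hp hfe.symm h) (fun hf => hf)
  calc G.card ≤ (A1 ∪ (Ab ∪ (Tb ∪ Nb))).card := Finset.card_le_card hsub
    _ ≤ A1.card + (Ab ∪ (Tb ∪ Nb)).card := Finset.card_union_le _ _
    _ ≤ A1.card + (Ab.card + (Tb ∪ Nb).card) :=
        Nat.add_le_add_left (Finset.card_union_le _ _) _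
    _ ≤ A1.card + (Ab.card + (Tb.card + Nb.card)) :=
        Nat.add_le_add_left (Nat.add_le_add_left (Finset.card_union_le _ _) _) _
    _ ≤ 4 * n := by omega
end

section
/- For every permutation X ∈ S_n and every integer k ≥ 2: X is k-decomposable if and only if X avoids every simple permutation of length at least k+1. -/
open scoped Classical

/-! ### helper lemmas -/

/-! helpers -/

lemma ncard_Icc (a b : ℕ) : (Set.Icc a b).ncard = b + 1 - a := by
  rw [← Finset.coe_Icc, Set.ncard_coe_finset, Nat.card_Icc]

lemma image_Icc_card {X : ℕ → ℕ} {a b c d : ℕ} (hinj : Set.InjOn X (Set.Icc a b))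
    (him : X '' Set.Icc a b = Set.Icc c d) : d + 1 - c = b + 1 - a := by
  have := Set.ncard_image_of_injOn hinj
  rw [him, ncard_Icc, ncard_Icc] at this
  exact this

lemma isBlockOf_mk {n : ℕ} {X : ℕ → ℕ} {a b c d : ℕ} (hinj : Set.InjOn X (Set.Icc 1 n))
    (h1 : 1 ≤ a) (hab : a ≤ b) (hbn : b ≤ n)
    (him : X '' Set.Icc a b = Set.Icc c d) : IsBlockOf n X a b := by
  have hsub : Set.Icc a b ⊆ Set.Icc 1 n := Set.Icc_subset_Icc h1 hbn
  have hinj' := hinj.mono hsub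
  have hcard := image_Icc_card hinj' him
  have hcd : c ≤ d := by
    have : X a ∈ Set.Icc c d := him ▸ Set.mem_image_of_mem X (Set.mem_Icc.2 ⟨le_refl a, hab⟩)
    exact le_trans (Set.mem_Icc.1 this).1 (Set.mem_Icc.1 this).2
  refine ⟨h1, hab, hbn, c, ?_⟩
  have : d = c + (b - a) := by omega
  rw [him, this]

lemma isBlockOf_image {n : ℕ} {X : ℕ → ℕ} {a b : ℕ} (h : IsBlockOf n X a b) :
    ∃ c : ℕ, X '' Set.Icc a b = Set.Icc c (c + (b - a)) := h.2.2.2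

/-- union of two overlapping blocks is a block -/
lemma blk_union {n : ℕ} {X : ℕ → ℕ} {a1 b1 a2 b2 : ℕ} (hinj : Set.InjOn X (Set.Icc 1 n))
    (h1 : IsBlockOf n X a1 b1) (h2 : IsBlockOf n X a2 b2)
    (ha : a1 ≤ a2) (hov : a2 ≤ b1) : IsBlockOf n X a1 (max b1 b2) := by
  obtain ⟨ha1, hab1, hb1n, c1, him1⟩ := h1
  obtain ⟨ha2, hab2, hb2n, c2, him2⟩ := h2
  set d1 := c1 + (b1 - a1) with hd1
  set d2 := c2 + (b2 - a2) with hd2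
  have hz : X a2 ∈ Set.Icc c1 d1 ∩ Set.Icc c2 d2 := by
    constructor
    · rw [← him1]; exact Set.mem_image_of_mem X (Set.mem_Icc.2 ⟨ha, hov⟩)
    · rw [← him2]; exact Set.mem_image_of_mem X (Set.mem_Icc.2 ⟨le_refl _, hab2⟩)
  obtain ⟨⟨hz1, hz2⟩, hz3, hz4⟩ := hz
  have hpos : Set.Icc a1 (max b1 b2) = Set.Icc a1 b1 ∪ Set.Icc a2 b2 := by
    ext x; simp only [Set.mem_Icc, Set.mem_union]; omega
  have him : X '' Set.Icc a1 (max b1 b2) = Set.Icc (min c1 c2) (max d1 d2) := by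
    rw [hpos, Set.image_union, him1, him2]
    ext x; simp only [Set.mem_Icc, Set.mem_union, Set.mem_Icc] at hz1 hz2 hz3 hz4 ⊢; omega
  exact isBlockOf_mk hinj ha1 (le_trans hab1 (le_max_left _ _)) (max_le hb1n hb2n) him

/-- the value `v` in the image-interval of a block is attained inside the block -/
lemma blk_attain {n : ℕ} {X : ℕ → ℕ} {a b c : ℕ} (hinj : Set.InjOn X (Set.Icc 1 n))
    (h1 : 1 ≤ a) (hbn : b ≤ n)
    (him : X '' Set.Icc a b = Set.Icc c (c + (b - a)))
    {t : ℕ} (ht : t ∈ Set.Icc 1 n) (hv : X t ∈ Set.Icc c (c + (b - a))) :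
    t ∈ Set.Icc a b := by
  rw [← him] at hv
  obtain ⟨u, hu, huv⟩ := hv
  have : u = t := hinj (Set.Icc_subset_Icc h1 hbn hu) ht huv
  exact this ▸ hu


/-- finite nonempty convex subset of ℕ is an Icc -/
lemma convex_eq_Icc (S : Set ℕ) (hfin : S.Finite) (hne : S.Nonempty)
    (hconv : ∀ u v w, u ∈ S → w ∈ S → u ≤ v → v ≤ w → v ∈ S) :
    S = Set.Icc (sInf S) (sSup S) := by
  apply Set.eq_of_subset_of_subset
  · intro x hx
    exact Set.mem_Icc.2 ⟨Nat.sInf_le hx, le_csSup hfin.bddAbove hx⟩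
  · intro x hx
    obtain ⟨h1, h2⟩ := Set.mem_Icc.1 hx
    exact hconv _ _ _ (Nat.sInf_mem hne) (Nat.sSup_mem hne hfin.bddAbove) h1 h2

/-- locate t in a sequence of intervals -/
lemma seq_locate (c : ℕ → ℕ) (m t : ℕ) (h0 : c 0 ≤ t) (hm : t < c m) :
    ∃ i < m, c i ≤ t ∧ t < c (i + 1) := by
  induction m with
  | zero => omega
  | succ m ih =>
    by_cases h : t < c m
    · obtain ⟨i, hi, h1, h2⟩ := ih h
      exact ⟨i, by omega, h1, h2⟩
    · exact ⟨m, by omega, by omega, hm⟩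

lemma seq_mono (c : ℕ → ℕ) (m : ℕ) (hm : ∀ i < m, c i < c (i + 1)) :
    ∀ d i, i + d ≤ m → c i + d ≤ c (i + d) := by
  intro d
  induction d with
  | zero => intro i _; simp
  | succ d ih =>
    intro i h
    have h1 := ih i (by omega)
    have h2 := hm (i + d) (by omega)
    have he : i + (d + 1) = (i + d) + 1 := by omega
    rw [he]; omega


noncomputable def rankOf (m : ℕ) (y : ℕ → ℕ) (i : ℕ) : ℕ :=
  ((Finset.Icc 1 m).filter (fun j => y j ≤ y i)).card

lemma rankOf_lt {m : ℕ} {y : ℕ → ℕ} (hinj : Set.InjOn y (Set.Icc 1 m))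
    {i j : ℕ} (hi : i ∈ Set.Icc 1 m) (hj : j ∈ Set.Icc 1 m) :
    (rankOf m y i < rankOf m y j ↔ y i < y j) := by
  have key : ∀ p q : ℕ, p ∈ Set.Icc 1 m → q ∈ Set.Icc 1 m → y p < y q →
      rankOf m y p < rankOf m y q := by
    intro p q hp hq hlt
    apply Finset.card_lt_card
    rw [Finset.ssubset_iff_of_subset]
    · refine ⟨q, ?_, ?_⟩
      · simp only [Finset.mem_filter, Finset.mem_Icc]
        exact ⟨by simpa [Finset.mem_Icc] using (Set.mem_Icc.1 hq), le_refl _⟩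
      · simp only [Finset.mem_filter, Finset.mem_Icc]
        intro h; omega
    · intro x hx
      simp only [Finset.mem_filter] at hx ⊢
      exact ⟨hx.1, by omega⟩
  constructor
  · intro h
    rcases lt_trichotomy (y i) (y j) with h' | h' | h'
    · exact h'
    · exact absurd h (by rw [hinj hi hj h']; exact lt_irrefl _)
    · have := key j i hj hi h'; omega
  · exact key i j hi hj

lemma rankOf_mem {m : ℕ} {y : ℕ → ℕ} {i : ℕ} (hi : i ∈ Set.Icc 1 m) :
    rankOf m y i ∈ Set.Icc 1 m := by
  unfold rankOf
  constructor
  · have : i ∈ (Finset.Icc 1 m).filter (fun j => y j ≤ y i) := by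
      simp only [Finset.mem_filter, Finset.mem_Icc]
      exact ⟨by simpa [Finset.mem_Icc] using (Set.mem_Icc.1 hi), le_refl _⟩
    have := Finset.card_pos.2 ⟨i, this⟩
    omega
  · calc rankOf m y i ≤ (Finset.Icc 1 m).card := Finset.card_le_card (Finset.filter_subset _ _)
    _ = m := by rw [Nat.card_Icc]; omega

lemma rankOf_perm {m : ℕ} {y : ℕ → ℕ} (hinj : Set.InjOn y (Set.Icc 1 m)) :
    IsPermOn m (rankOf m y) := by
  have hmaps : Set.MapsTo (rankOf m y) (Set.Icc 1 m) (Set.Icc 1 m) :=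
    fun i hi => rankOf_mem hi
  have hinj' : Set.InjOn (rankOf m y) (Set.Icc 1 m) := by
    intro i hi j hj hij
    rcases lt_trichotomy (y i) (y j) with h | h | h
    · have := (rankOf_lt hinj hi hj).2 h; omega
    · exact hinj hi hj h
    · have := (rankOf_lt hinj hj hi).2 h; omega
  have hfin : (Set.Icc 1 m).Finite := Set.finite_Icc _ _
  exact hfin.injOn_iff_bijOn_of_mapsTo hmaps |>.1 hinj'


lemma blockRestrict_eq {X : ℕ → ℕ} {a b c : ℕ} (hab : a ≤ b)
    (him : X '' Set.Icc a b = Set.Icc c (c + (b - a))) :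
    ∀ j, blockRestrict X a b j = X (a + j - 1) + 1 - c := by
  intro j
  unfold blockRestrict
  rw [him, csInf_Icc (by omega)]

lemma blk_val_mem {X : ℕ → ℕ} {a b c : ℕ}
    (him : X '' Set.Icc a b = Set.Icc c (c + (b - a))) {t : ℕ} (ht : t ∈ Set.Icc a b) :
    c ≤ X t ∧ X t ≤ c + (b - a) := by
  have : X t ∈ Set.Icc c (c + (b - a)) := him ▸ Set.mem_image_of_mem X ht
  exact Set.mem_Icc.1 this

lemma blockRestrict_perm {n : ℕ} {X : ℕ → ℕ} {a b : ℕ} (hX : IsPermOn n X)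
    (hb : IsBlockOf n X a b) : IsPermOn (b + 1 - a) (blockRestrict X a b) := by
  obtain ⟨h1, hab, hbn, c, him⟩ := hb
  have heq := blockRestrict_eq hab him
  have hsub : Set.Icc a b ⊆ Set.Icc 1 n := Set.Icc_subset_Icc h1 hbn
  refine ⟨?_, ?_, ?_⟩
  · intro j hj
    rw [Set.mem_Icc] at hj
    have ht : a + j - 1 ∈ Set.Icc a b := Set.mem_Icc.2 ⟨by omega, by omega⟩
    have := blk_val_mem him ht
    rw [heq j, Set.mem_Icc]; omega
  · intro j1 hj1 j2 hj2 hE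
    rw [Set.mem_Icc] at hj1 hj2
    have ht1 : a + j1 - 1 ∈ Set.Icc a b := Set.mem_Icc.2 ⟨by omega, by omega⟩
    have ht2 : a + j2 - 1 ∈ Set.Icc a b := Set.mem_Icc.2 ⟨by omega, by omega⟩
    have hv1 := blk_val_mem him ht1
    have hv2 := blk_val_mem him ht2
    rw [heq j1, heq j2] at hE
    have : X (a + j1 - 1) = X (a + j2 - 1) := by omega
    have := hX.2.1 (hsub ht1) (hsub ht2) this
    omega
  · intro v hv
    rw [Set.mem_Icc] at hv
    have : v + c - 1 ∈ X '' Set.Icc a b := by rw [him, Set.mem_Icc]; omega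
    obtain ⟨t, ht, htv⟩ := this
    rw [Set.mem_Icc] at ht
    refine ⟨t + 1 - a, Set.mem_Icc.2 ⟨by omega, by omega⟩, ?_⟩
    rw [heq]
    have : a + (t + 1 - a) - 1 = t := by omega
    rw [this, htv]
    have : c ≤ v + c - 1 := by omega
    omega

lemma contains_of_block_contains {n : ℕ} {X : ℕ → ℕ} {a b l : ℕ} {σ : ℕ → ℕ}
    (hb : IsBlockOf n X a b) (h : Contains (b + 1 - a) (blockRestrict X a b) l σ) :
    Contains n X l σ := by
  obtain ⟨h1, hab, hbn, c, him⟩ := hb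
  have heq := blockRestrict_eq hab him
  obtain ⟨f, hmaps, hmono, hiff⟩ := h
  refine ⟨fun i => a + f i - 1, ?_, ?_, ?_⟩
  · intro i hi
    have := Set.mem_Icc.1 (hmaps hi)
    beta_reduce
    rw [Set.mem_Icc]; omega
  · intro i hi j hj hij
    have h1' := Set.mem_Icc.1 (hmaps hi)
    have := hmono hi hj hij
    beta_reduce
    omega
  · intro i hi j hj
    have hfi := Set.mem_Icc.1 (hmaps hi)
    have hfj := Set.mem_Icc.1 (hmaps hj)
    have hti : a + f i - 1 ∈ Set.Icc a b := Set.mem_Icc.2 ⟨by omega, by omega⟩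
    have htj : a + f j - 1 ∈ Set.Icc a b := Set.mem_Icc.2 ⟨by omega, by omega⟩
    have hv1 := blk_val_mem him hti
    have hv2 := blk_val_mem him htj
    beta_reduce
    rw [hiff i hi j hj, heq, heq]
    omega

lemma block_contains_of_contains {n : ℕ} {X : ℕ → ℕ} {a b l : ℕ} {σ : ℕ → ℕ}
    (hb : IsBlockOf n X a b) (f : ℕ → ℕ)
    (hmaps : ∀ i ∈ Set.Icc 1 l, f i ∈ Set.Icc a b)
    (hmono : StrictMonoOn f (Set.Icc 1 l))
    (hiff : ∀ i ∈ Set.Icc 1 l, ∀ j ∈ Set.Icc 1 l, (σ i < σ j ↔ X (f i) < X (f j))) :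
    Contains (b + 1 - a) (blockRestrict X a b) l σ := by
  obtain ⟨h1, hab, hbn, c, him⟩ := hb
  have heq := blockRestrict_eq hab him
  refine ⟨fun i => f i + 1 - a, ?_, ?_, ?_⟩
  · intro i hi
    have := Set.mem_Icc.1 (hmaps i hi)
    beta_reduce
    rw [Set.mem_Icc]; omega
  · intro i hi j hj hij
    have h1' := Set.mem_Icc.1 (hmaps i hi)
    have := hmono hi hj hij
    beta_reduce
    omega
  · intro i hi j hj
    have hfi := Set.mem_Icc.1 (hmaps i hi)
    have hfj := Set.mem_Icc.1 (hmaps j hj)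
    have hv1 := blk_val_mem him (hmaps i hi)
    have hv2 := blk_val_mem him (hmaps j hj)
    beta_reduce
    rw [hiff i hi j hj, heq, heq]
    have e1 : a + (f i + 1 - a) - 1 = f i := by omega
    have e2 : a + (f j + 1 - a) - 1 = f j := by omega
    rw [e1, e2]
    omega


/-! ### Forward direction -/

lemma forward_avoids (k : ℕ) (hk : 2 ≤ k) (n : ℕ) (X : ℕ → ℕ) (hdec : KDecomposable k n X) :
    IsPermOn n X → ∀ l : ℕ, k + 1 ≤ l → ∀ σ : ℕ → ℕ, IsPermOn l σ → IsSimplePerm l σ →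
      Avoids n X l σ := by
  induction hdec with
  | base X =>
    intro _ l hl σ _ _ hcon
    obtain ⟨f, hfm, hfmono, _⟩ := hcon
    have h1 : (1 : ℕ) ∈ Set.Icc 1 l := Set.mem_Icc.2 ⟨le_refl _, by omega⟩
    have h2 : (2 : ℕ) ∈ Set.Icc 1 l := Set.mem_Icc.2 ⟨by omega, by omega⟩
    have hlt := hfmono h1 h2 (by omega)
    have hf1 := Set.mem_Icc.1 (hfm h1)
    have hf2 := Set.mem_Icc.1 (hfm h2)
    omega
  | step n X m c h2m hmk hc0 hcm hcmono hblk hrec ih =>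
    intro hX l hl σ hσ hsimp hcon
    obtain ⟨f, hfm, hfmono, hfiff⟩ := hcon
    by_cases hone : ∃ j < m, ∀ i ∈ Set.Icc 1 l, f i ∈ Set.Icc (c j) (c (j + 1) - 1)
    · obtain ⟨j, hj, hall⟩ := hone
      have hb := hblk j hj
      have hcj := hcmono j hj
      have hcon' := block_contains_of_contains hb f hall hfmono hfiff
      have hlen : c (j + 1) - 1 + 1 - c j = c (j + 1) - c j := by omega
      rw [hlen] at hcon'
      have hperm' : IsPermOn (c (j + 1) - c j) (blockRestrict X (c j) (c (j + 1) - 1)) := by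
        have := blockRestrict_perm hX hb
        rwa [hlen] at this
      exact ih j hj hperm' l hl σ hσ hsimp hcon'
    · push_neg at hone
      have hinj := hX.2.1
      have hloc : ∀ i ∈ Set.Icc 1 l, ∃ j, j < m ∧ c j ≤ f i ∧ f i < c (j + 1) := by
        intro i hi
        have hfi := Set.mem_Icc.1 (hfm hi)
        obtain ⟨j, hj, h1, h2⟩ := seq_locate c m (f i) (by omega) (by omega)
        exact ⟨j, hj, h1, h2⟩
      choose! g hg1 hg2 hg3 using hloc
      -- g is injective on Icc 1 l
      have hginj : ∀ i1 ∈ Set.Icc 1 l, ∀ i2 ∈ Set.Icc 1 l, g i1 = g i2 → i1 = i2 := by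
        intro i1 hi1 i2 hi2 hgg
        set j := g i1 with hjdef
        have hjm : j < m := hg1 i1 hi1
        set S : Set ℕ := {i | i ∈ Set.Icc 1 l ∧ c j ≤ f i ∧ f i < c (j + 1)} with hSdef
        have hi1S : i1 ∈ S := ⟨hi1, hg2 i1 hi1, hg3 i1 hi1⟩
        have hi2S : i2 ∈ S := ⟨hi2, hgg ▸ hg2 i2 hi2, hgg ▸ hg3 i2 hi2⟩
        have hSsub : S ⊆ Set.Icc 1 l := fun x hx => hx.1
        have hSfin : S.Finite := Set.Finite.subset (Set.finite_Icc 1 l) hSsub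
        have hSconv : ∀ u v w, u ∈ S → w ∈ S → u ≤ v → v ≤ w → v ∈ S := by
          intro u v w hu hw huv hvw
          obtain ⟨hu0, hu2, hu3⟩ := hu
          obtain ⟨hw0, hw2, hw3⟩ := hw
          have hu1 := Set.mem_Icc.1 hu0
          have hw1 := Set.mem_Icc.1 hw0
          have hv : v ∈ Set.Icc 1 l := Set.mem_Icc.2 ⟨by omega, by omega⟩
          have h1 := hfmono.monotoneOn hu0 hv huv
          have h2 := hfmono.monotoneOn hv hw0 hvw
          exact ⟨hv, by omega, by omega⟩
        have hSne : S.Nonempty := ⟨i1, hi1S⟩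
        have hSeq := convex_eq_Icc S hSfin hSne hSconv
        set p := sInf S
        set q := sSup S
        have hpS : p ∈ S := Nat.sInf_mem hSne
        have hqS : q ∈ S := Nat.sSup_mem hSne hSfin.bddAbove
        have hp1 := Set.mem_Icc.1 (hSsub hpS)
        have hq1 := Set.mem_Icc.1 (hSsub hqS)
        have hpq : p ≤ q := le_csSup hSfin.bddAbove hpS
        -- σ '' Icc p q is convex
        have hb := hblk j hjm
        obtain ⟨hbj1, hbj2, hbj3, cj, himj⟩ := hb
        have hcj := hcmono j hjm
        have hT : ∀ u v w, u ∈ σ '' Set.Icc p q → w ∈ σ '' Set.Icc p q → u ≤ v → v ≤ w →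
            v ∈ σ '' Set.Icc p q := by
          intro u v w hu hw huv hvw
          obtain ⟨iu, hiu, rfl⟩ := hu
          obtain ⟨iw, hiw, rfl⟩ := hw
          have hiuS : iu ∈ S := hSeq ▸ hiu
          have hiwS : iw ∈ S := hSeq ▸ hiw
          have hiul : iu ∈ Set.Icc 1 l := hSsub hiuS
          have hiwl : iw ∈ Set.Icc 1 l := hSsub hiwS
          have hσu := Set.mem_Icc.1 (hσ.1 hiul)
          have hv : v ∈ Set.Icc 1 l := by
            have hσw := Set.mem_Icc.1 (hσ.1 hiwl)
            exact Set.mem_Icc.2 ⟨by omega, by omega⟩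
          obtain ⟨i3, hi3, hi3v⟩ := hσ.2.2 hv
          rcases eq_or_lt_of_le huv with he | hltu
          · exact ⟨iu, hiu, he⟩
          rcases eq_or_lt_of_le hvw with he | hltw
          · exact ⟨iw, hiw, he.symm⟩
          subst hi3v
          obtain ⟨hiu0, hiu2, hiu3⟩ := hiuS
          obtain ⟨hiw0, hiw2, hiw3⟩ := hiwS
          have hXu : X (f iu) < X (f i3) := (hfiff iu hiul i3 hi3).1 hltu
          have hXw : X (f i3) < X (f iw) := (hfiff i3 hi3 iw hiwl).1 hltw
          have hvu := blk_val_mem himj (Set.mem_Icc.2 ⟨hiu2, by omega⟩)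
          have hvw' := blk_val_mem himj (Set.mem_Icc.2 ⟨hiw2, by omega⟩)
          have hfi3 : f i3 ∈ Set.Icc 1 n := hfm hi3
          have hattain : f i3 ∈ Set.Icc (c j) (c (j + 1) - 1) :=
            blk_attain hinj hbj1 hbj3 himj hfi3 (Set.mem_Icc.2 ⟨by omega, by omega⟩)
          have hi3S : i3 ∈ S := by
            obtain ⟨ha1, ha2⟩ := Set.mem_Icc.1 hattain
            exact ⟨hi3, by omega, by omega⟩
          exact ⟨i3, hSeq ▸ hi3S, rfl⟩
        have hTfin : (σ '' Set.Icc p q).Finite := (Set.finite_Icc p q).image σ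
        have hTne : (σ '' Set.Icc p q).Nonempty := ⟨σ p, Set.mem_image_of_mem σ (Set.mem_Icc.2 ⟨le_refl _, hpq⟩)⟩
        have hTeq := convex_eq_Icc _ hTfin hTne hT
        have hσinj : Set.InjOn σ (Set.Icc p q) :=
          hσ.2.1.mono (Set.Icc_subset_Icc (by omega) (by omega))
        have hcard := image_Icc_card hσinj hTeq
        have hblkσ : IsBlockOf l σ p q := by
          refine isBlockOf_mk hσ.2.1 (by omega) hpq (by omega) (c := sInf (σ '' Set.Icc p q))
            (d := sSup (σ '' Set.Icc p q)) hTeq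
        rcases hsimp p q hblkσ with he | ⟨hp1', hql⟩
        · -- p = q : S is a singleton
          have h1 : i1 ∈ Set.Icc p q := hSeq ▸ hi1S
          have h2 : i2 ∈ Set.Icc p q := hSeq ▸ hi2S
          rw [Set.mem_Icc] at h1 h2
          omega
        · -- p = 1 and q = l : all of Icc 1 l is in block j, contradiction with hone
          exfalso
          obtain ⟨i0, hi0, hnot⟩ := hone j hjm
          have hi0S : i0 ∈ S := by rw [hSeq, hp1', hql]; exact hi0
          obtain ⟨_, hc1, hc2⟩ := hi0S
          exact hnot (Set.mem_Icc.2 ⟨hc1, by omega⟩)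
      -- cardinality contradiction
      have : (Finset.Icc 1 l).card ≤ (Finset.range m).card := by
        apply Finset.card_le_card_of_injOn g
        · intro i hi
          rw [Finset.mem_coe, Finset.mem_range]
          exact hg1 i (by simpa [Set.mem_Icc] using Finset.mem_Icc.1 hi)
        · intro i1 hi1 i2 hi2 h
          exact hginj i1 (by simpa [Set.mem_Icc] using Finset.mem_Icc.1 (Finset.mem_coe.1 hi1))
            i2 (by simpa [Set.mem_Icc] using Finset.mem_Icc.1 (Finset.mem_coe.1 hi2)) h
      rw [Nat.card_Icc, Finset.card_range] at this
      omega

/-! ### Backward direction: sum/skew decompositions and maximal proper blocks -/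

/-- proper block -/
def PBlk (n : ℕ) (X : ℕ → ℕ) (a b : ℕ) : Prop := IsBlockOf n X a b ∧ b + 1 < a + n

/-- X has a sum or skew decomposition at some j -/
def HasSS (n : ℕ) (X : ℕ → ℕ) : Prop :=
  ∃ j, 1 ≤ j ∧ j < n ∧
    (X '' Set.Icc 1 j = Set.Icc 1 j ∨ X '' Set.Icc 1 j = Set.Icc (n - j + 1) n)

lemma image_compl_Icc {n : ℕ} {X : ℕ → ℕ} (hX : IsPermOn n X) {j c d : ℕ}
    (hj1 : 1 ≤ j) (hjn : j < n) (him : X '' Set.Icc 1 j = Set.Icc c d) :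
    X '' Set.Icc (j + 1) n = Set.Icc 1 n \ Set.Icc c d := by
  have hsub : Set.Icc 1 j ⊆ Set.Icc 1 n := Set.Icc_subset_Icc (le_refl _) (by omega)
  have hdiff := hX.2.1.image_diff (t := Set.Icc 1 j)
  rw [Set.inter_eq_self_of_subset_right hsub] at hdiff
  have hpos : Set.Icc 1 n \ Set.Icc 1 j = Set.Icc (j + 1) n := by
    ext x; simp only [Set.mem_diff, Set.mem_Icc]; omega
  rw [hpos, hX.image_eq, him] at hdiff
  exact hdiff

lemma image_prefix_compl {n : ℕ} {X : ℕ → ℕ} (hX : IsPermOn n X) {j c d : ℕ}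
    (hj1 : 1 ≤ j) (hjn : j < n) (him : X '' Set.Icc (j + 1) n = Set.Icc c d) :
    X '' Set.Icc 1 j = Set.Icc 1 n \ Set.Icc c d := by
  have hsub : Set.Icc (j + 1) n ⊆ Set.Icc 1 n := Set.Icc_subset_Icc (by omega) (le_refl _)
  have hdiff := hX.2.1.image_diff (t := Set.Icc (j + 1) n)
  rw [Set.inter_eq_self_of_subset_right hsub] at hdiff
  have hpos : Set.Icc 1 n \ Set.Icc (j + 1) n = Set.Icc 1 j := by
    ext x; simp only [Set.mem_diff, Set.mem_Icc]; omega
  rw [hpos, hX.image_eq, him] at hdiff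
  exact hdiff

lemma sum_or_skew {n : ℕ} {X : ℕ → ℕ} {a2 b1 : ℕ} (hX : IsPermOn n X)
    (h1 : IsBlockOf n X 1 b1) (h2 : IsBlockOf n X a2 n)
    (ha2 : 1 < a2) (hov : a2 ≤ b1) (hb1 : b1 < n) : HasSS n X := by
  have hinj := hX.2.1
  obtain ⟨_, hb11, hb1n, c1, him1⟩ := h1
  obtain ⟨ha21, ha2n, _, c2, him2⟩ := h2
  set d1 := c1 + (b1 - 1) with hd1
  set d2 := c2 + (n - a2) with hd2
  have hcard1 := image_Icc_card (hinj.mono (Set.Icc_subset_Icc (le_refl _) hb1n)) him1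
  have hcard2 := image_Icc_card (hinj.mono (Set.Icc_subset_Icc (by omega) (le_refl _))) him2
  -- X a2 is in both images
  have hz1 : X a2 ∈ Set.Icc c1 d1 := him1 ▸ Set.mem_image_of_mem X (Set.mem_Icc.2 ⟨by omega, hov⟩)
  have hz2 : X a2 ∈ Set.Icc c2 d2 := him2 ▸ Set.mem_image_of_mem X (Set.mem_Icc.2 ⟨le_refl _, by omega⟩)
  rw [Set.mem_Icc] at hz1 hz2
  -- neither image is contained in the other
  have hn21 : ¬(c1 ≤ c2 ∧ d2 ≤ d1) := by
    rintro ⟨hc, hd⟩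
    have hXn : X n ∈ Set.Icc c1 d1 :=
      Set.Icc_subset_Icc hc hd (him2 ▸ Set.mem_image_of_mem X (Set.mem_Icc.2 ⟨by omega, le_refl _⟩))
    rw [← him1] at hXn
    obtain ⟨u, hu, huv⟩ := hXn
    rw [Set.mem_Icc] at hu
    have : u = n := hinj (Set.mem_Icc.2 ⟨hu.1, by omega⟩) (Set.mem_Icc.2 ⟨by omega, le_refl _⟩) huv
    omega
  have hn12 : ¬(c2 ≤ c1 ∧ d1 ≤ d2) := by
    rintro ⟨hc, hd⟩
    have hX1 : X 1 ∈ Set.Icc c2 d2 :=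
      Set.Icc_subset_Icc hc hd (him1 ▸ Set.mem_image_of_mem X (Set.mem_Icc.2 ⟨le_refl _, hb11⟩))
    rw [← him2] at hX1
    obtain ⟨u, hu, huv⟩ := hX1
    rw [Set.mem_Icc] at hu
    have : u = 1 := hinj (Set.mem_Icc.2 ⟨by omega, hu.2⟩) (Set.mem_Icc.2 ⟨le_refl _, by omega⟩) huv
    omega
  -- the two images cover [1,n]
  have hunion : Set.Icc c1 d1 ∪ Set.Icc c2 d2 = Set.Icc 1 n := by
    rw [← him1, ← him2, ← Set.image_union]
    have : Set.Icc 1 b1 ∪ Set.Icc a2 n = Set.Icc 1 n := by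
      ext x; simp only [Set.mem_union, Set.mem_Icc]; omega
    rw [this, hX.image_eq]
  have hmem1 : (1 : ℕ) ∈ Set.Icc c1 d1 ∪ Set.Icc c2 d2 := by
    rw [hunion]; exact Set.mem_Icc.2 ⟨le_refl _, by omega⟩
  have hmemn : (n : ℕ) ∈ Set.Icc c1 d1 ∪ Set.Icc c2 d2 := by
    rw [hunion]; exact Set.mem_Icc.2 ⟨by omega, le_refl _⟩
  have hsub1 : Set.Icc c1 d1 ⊆ Set.Icc 1 n := hunion ▸ Set.subset_union_left
  have hsub2 : Set.Icc c2 d2 ⊆ Set.Icc 1 n := hunion ▸ Set.subset_union_right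
  have hc1b := Set.mem_Icc.1 (hsub1 (Set.mem_Icc.2 ⟨le_refl c1, by omega⟩))
  have hc2b := Set.mem_Icc.1 (hsub2 (Set.mem_Icc.2 ⟨le_refl c2, by omega⟩))
  have hd1b := Set.mem_Icc.1 (hsub1 (Set.mem_Icc.2 ⟨by omega, le_refl d1⟩))
  have hd2b := Set.mem_Icc.1 (hsub2 (Set.mem_Icc.2 ⟨by omega, le_refl d2⟩))
  rw [Set.mem_union, Set.mem_Icc, Set.mem_Icc] at hmem1 hmemn
  have ha2n' : a2 - 1 + 1 = a2 := by omega
  have hpre := image_prefix_compl hX (j := a2 - 1) (by omega) (by omega)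
    (c := c2) (d := d2) (by rw [ha2n']; exact him2)
  by_cases hc1 : c1 = 1
  · -- sum decomposition at j = a2 - 1
    have hd2n : d2 = n := by omega
    have hc2two : 2 ≤ c2 := by omega
    have hpre' : X '' Set.Icc 1 (a2 - 1) = Set.Icc 1 (c2 - 1) := by
      rw [hpre]; ext x; simp only [Set.mem_diff, Set.mem_Icc]; omega
    have hcard := image_Icc_card (hinj.mono (Set.Icc_subset_Icc (le_refl _) (by omega))) hpre'
    refine ⟨a2 - 1, by omega, by omega, Or.inl ?_⟩
    rw [hpre']
    have : c2 - 1 = a2 - 1 := by omega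
    rw [this]
  · -- skew decomposition at j = a2 - 1
    have hc2 : c2 = 1 := by omega
    have hd2d1 : d2 < d1 := by
      rcases Nat.lt_or_ge d2 d1 with h | h
      · exact h
      · exact absurd ⟨by omega, by omega⟩ hn12
    have hd1n : d1 = n := by omega
    have hpre' : X '' Set.Icc 1 (a2 - 1) = Set.Icc (d2 + 1) n := by
      rw [hpre]; ext x; simp only [Set.mem_diff, Set.mem_Icc]; omega
    have hcard := image_Icc_card (hinj.mono (Set.Icc_subset_Icc (le_refl _) (by omega))) hpre'
    refine ⟨a2 - 1, by omega, by omega, Or.inr ?_⟩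
    rw [hpre']
    have : d2 + 1 = n - (a2 - 1) + 1 := by omega
    rw [this]

lemma union_proper {n : ℕ} {X : ℕ → ℕ} {a1 b1 a2 b2 : ℕ} (hX : IsPermOn n X)
    (hnss : ¬ HasSS n X) (h1 : PBlk n X a1 b1) (h2 : PBlk n X a2 b2)
    (ha : a1 ≤ a2) (hov : a2 ≤ b1) : PBlk n X a1 (max b1 b2) := by
  obtain ⟨hb1, hp1⟩ := h1
  obtain ⟨hb2, hp2⟩ := h2
  have hu := blk_union hX.2.1 hb1 hb2 ha hov
  refine ⟨hu, ?_⟩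
  by_contra h
  have h1a : 1 ≤ a1 := hb1.1
  have hmn : max b1 b2 ≤ n := hu.2.2.1
  have hm1 : b1 ≤ max b1 b2 := le_max_left _ _
  have hm2 : b2 ≤ max b1 b2 := le_max_right _ _
  have ha1 : a1 = 1 := by omega
  have hmax : max b1 b2 = n := by omega
  rcases le_or_gt b2 b1 with hle | hlt
  · have : max b1 b2 = b1 := max_eq_left hle
    omega
  · have hb2n : b2 = n := by omega
    have ha12 : a1 < a2 := by
      rcases Nat.lt_or_ge a1 a2 with h' | h'
      · exact h'
      · exfalso; have : a1 = a2 := by omega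
        omega
    rw [ha1] at hb1
    rw [hb2n] at hb2
    exact hnss (sum_or_skew hX hb1 hb2 (by omega) hov (by omega))

/-- there is a maximal proper block containing any given position -/
lemma exists_maxblk {n : ℕ} {X : ℕ → ℕ} (hX : IsPermOn n X) (hnss : ¬ HasSS n X)
    (hn : 2 ≤ n) {p : ℕ} (hp1 : 1 ≤ p) (hpn : p ≤ n) :
    ∃ a b, PBlk n X a b ∧ a ≤ p ∧ p ≤ b ∧
      ∀ a' b', PBlk n X a' b' → a' ≤ p → p ≤ b' → a ≤ a' ∧ b' ≤ b := by
  have hsing : PBlk n X p p := by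
    refine ⟨⟨hp1, le_refl _, hpn, X p, ?_⟩, by omega⟩
    rw [Set.Icc_self, Set.image_singleton, Nat.sub_self, Nat.add_zero, Set.Icc_self]
  set SA := {a | ∃ b, PBlk n X a b ∧ a ≤ p ∧ p ≤ b} with hSA
  set SB := {b | ∃ a, PBlk n X a b ∧ a ≤ p ∧ p ≤ b} with hSB
  have hSAne : SA.Nonempty := ⟨p, p, hsing, le_refl _, le_refl _⟩
  have hSBne : SB.Nonempty := ⟨p, p, hsing, le_refl _, le_refl _⟩
  have hSBbdd : BddAbove SB := by
    refine ⟨n, ?_⟩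
    rintro b ⟨a, hb, -, -⟩
    exact hb.1.2.2.1
  obtain ⟨b1, hb1, ha0p, hpb1⟩ := Nat.sInf_mem hSAne
  obtain ⟨a2, hb2, ha2p, hpb0⟩ := Nat.sSup_mem hSBne hSBbdd
  set a0 := sInf SA
  set b0 := sSup SB
  have ha0a2 : a0 ≤ a2 := Nat.sInf_le ⟨b0, hb2, ha2p, hpb0⟩
  have hb1b0 : b1 ≤ b0 := le_csSup hSBbdd ⟨a0, hb1, ha0p, hpb1⟩
  have hu := union_proper hX hnss hb1 hb2 ha0a2 (le_trans ha2p hpb1)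
  rw [max_eq_right hb1b0] at hu
  refine ⟨a0, b0, hu, ha0p, hpb0, ?_⟩
  intro a' b' h' ha' hb'
  exact ⟨Nat.sInf_le ⟨b', h', ha', hb'⟩, le_csSup hSBbdd ⟨a', h', ha', hb'⟩⟩

/-- no proper block containing `p` extends strictly to the left of `p` -/
def LeftLim (n : ℕ) (X : ℕ → ℕ) (p : ℕ) : Prop :=
  ∀ a' b', PBlk n X a' b' → a' ≤ p → p ≤ b' → p ≤ a'

lemma chain_exists {n : ℕ} {X : ℕ → ℕ} (hX : IsPermOn n X) (hnss : ¬ HasSS n X)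
    (hn : 2 ≤ n) :
    ∀ d p, 1 ≤ p → p ≤ n → n + 1 - p ≤ d → LeftLim n X p →
      ∃ (m : ℕ) (c : ℕ → ℕ), 1 ≤ m ∧ c 0 = p ∧ c m = n + 1 ∧ (∀ i < m, c i < c (i + 1)) ∧
        (∀ i < m, PBlk n X (c i) (c (i + 1) - 1)) ∧
        (∀ i < m, ∀ a' b', PBlk n X a' b' → a' ≤ c i → c i ≤ b' →
          c i ≤ a' ∧ b' ≤ c (i + 1) - 1) := by
  intro d
  induction d with
  | zero => intro p hp1 hpn hd _; exact absurd hd (by omega)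
  | succ d ih =>
    intro p hp1 hpn hd hll
    obtain ⟨a, b, hab, hap, hpb, hmax⟩ := exists_maxblk hX hnss hn hp1 hpn
    have hpa : a = p := le_antisymm hap (hll a b hab hap hpb)
    subst hpa
    have hble : b ≤ n := hab.1.2.2.1
    have hprop : b + 1 < a + n := hab.2
    by_cases hend : b = n
    · refine ⟨1, fun i => if i = 0 then a else n + 1, le_refl _, by simp, by simp, ?_, ?_, ?_⟩
      · intro i hi
        have : i = 0 := by omega
        subst this
        norm_num
        omega
      · intro i hi
        have : i = 0 := by omega
        subst this
        norm_num
        exact hend ▸ hab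
      · intro i hi a' b' h' ha' hb'
        have : i = 0 := by omega
        subst this
        norm_num at ha' hb' ⊢
        have := hmax a' b' h' ha' hb'
        omega
    · have hbn : b < n := lt_of_le_of_ne hble hend
      have hll' : LeftLim n X (b + 1) := by
        intro a' b' h' ha' hb'
        by_contra hlt
        push_neg at hlt
        rcases Nat.lt_or_ge a' a with hc | hc
        · have := hll a' b' h' (by omega) (by omega)
          omega
        · have hu := union_proper hX hnss hab h' hc (by omega)
          have hmbb : b ≤ max b b' := le_max_left _ _
          have hmbb' : b' ≤ max b b' := le_max_right _ _
          obtain ⟨-, hle⟩ := hmax a (max b b') hu (le_refl a) (by omega)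
          omega
      obtain ⟨m, c, hm1, hc0, hcm, hmono, hblks, hinv⟩ :=
        ih (b + 1) (by omega) (by omega) (by omega) hll'
      refine ⟨m + 1, fun i => if i = 0 then a else c (i - 1), by omega, by simp, ?_, ?_, ?_, ?_⟩
      · simp only [if_neg (by omega : ¬ (m + 1 = 0))]
        simpa using hcm
      · intro i hi
        by_cases h0 : i = 0
        · subst h0
          norm_num
          simpa [hc0] using (by omega : a < b + 1)
        · simp only [if_neg h0, if_neg (by omega : ¬ (i + 1 = 0))]
          have he : i + 1 - 1 = (i - 1) + 1 := by omega
          rw [he]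
          exact hmono (i - 1) (by omega)
      · intro i hi
        by_cases h0 : i = 0
        · subst h0
          norm_num
          have he : c (1 - 1) - 1 = b := by simp [hc0]
          rw [he]
          exact hab
        · simp only [if_neg h0, if_neg (by omega : ¬ (i + 1 = 0))]
          have he : i + 1 - 1 = (i - 1) + 1 := by omega
          rw [he]
          exact hblks (i - 1) (by omega)
      · intro i hi a' b' h' ha' hb'
        by_cases h0 : i = 0
        · subst h0
          norm_num at ha' hb' ⊢
          have := hmax a' b' h' ha' hb'
          have he : c (1 - 1) = b + 1 := by simp [hc0]
          rw [he]
          omega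
        · simp only [if_neg h0, if_neg (by omega : ¬ (i + 1 = 0))] at ha' hb' ⊢
          have he : i + 1 - 1 = (i - 1) + 1 := by omega
          rw [he]
          exact hinv (i - 1) (by omega) a' b' h' ha' hb'

lemma decomp_step {n k : ℕ} {X : ℕ → ℕ} (hn : 2 ≤ n) (hk : 2 ≤ k) (hX : IsPermOn n X)
    (H : ∀ l : ℕ, k + 1 ≤ l → ∀ σ : ℕ → ℕ, IsPermOn l σ → IsSimplePerm l σ → Avoids n X l σ) :
    ∃ (m : ℕ) (c : ℕ → ℕ), 2 ≤ m ∧ m ≤ k ∧ c 0 = 1 ∧ c m = n + 1 ∧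
      (∀ i < m, c i < c (i + 1)) ∧ (∀ i < m, IsBlockOf n X (c i) (c (i + 1) - 1)) := by
  have hinj := hX.2.1
  by_cases hss : HasSS n X
  · -- sum or skew decomposition: two blocks
    obtain ⟨j, hj1, hjn, hcase⟩ := hss
    refine ⟨2, fun i => if i = 0 then 1 else if i = 1 then j + 1 else n + 1,
      le_refl _, hk, by norm_num, by norm_num, ?_, ?_⟩
    · intro i hi
      interval_cases i <;> norm_num <;> omega
    · intro i hi
      interval_cases i
      · norm_num
        rcases hcase with h | h
        · exact isBlockOf_mk hinj (le_refl _) hj1 (by omega) h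
        · exact isBlockOf_mk hinj (le_refl _) hj1 (by omega) h
      · norm_num
        rcases hcase with h | h
        · have hc := image_compl_Icc hX hj1 hjn h
          have he : Set.Icc 1 n \ Set.Icc 1 j = Set.Icc (j + 1) n := by
            ext x; simp only [Set.mem_diff, Set.mem_Icc]; omega
          rw [he] at hc
          exact isBlockOf_mk hinj (by omega) (by omega) (le_refl _) hc
        · have hc := image_compl_Icc hX hj1 hjn h
          have he : Set.Icc 1 n \ Set.Icc (n - j + 1) n = Set.Icc 1 (n - j) := by
            ext x; simp only [Set.mem_diff, Set.mem_Icc]; omega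
          rw [he] at hc
          exact isBlockOf_mk hinj (by omega) (by omega) (le_refl _) hc
  · -- no sum/skew: chain of maximal proper blocks
    have hll1 : LeftLim n X 1 := fun a' b' h' _ _ => h'.1.1
    obtain ⟨m, c, hm1, hc0, hcm, hmono, hblks, hinv⟩ :=
      chain_exists hX hss hn (n + 1) 1 (le_refl _) (by omega) (by omega) hll1
    have hmono' : ∀ i j, i ≤ j → j ≤ m → c i + (j - i) ≤ c j := by
      intro i j hij hjm
      have := seq_mono c m hmono (j - i) i (by omega)
      have he : i + (j - i) = j := by omega
      rw [he] at this
      omega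
    have hcbound : ∀ i, i ≤ m → 1 ≤ c i ∧ c i ≤ n + 1 := by
      intro i him
      have h1 := hmono' 0 i (by omega) him
      have h2 := hmono' i m him (le_refl _)
      omega
    have hcpos : ∀ i, i < m → c i ≤ n := by
      intro i him
      have h2 := hmono' i m (by omega) (le_refl _)
      omega
    have hm2 : 2 ≤ m := by
      by_contra h
      have hm : m = 1 := by omega
      have hp := (hblks 0 (by omega)).2
      norm_num at hp
      rw [hm] at hcm
      omega
    set y : ℕ → ℕ := fun i => X (c (i - 1)) with hy
    have hyinj : Set.InjOn y (Set.Icc 1 m) := by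
      intro i hi j hj he
      rw [Set.mem_Icc] at hi hj
      have hbi := hcbound (i - 1) (by omega)
      have hbj := hcbound (j - 1) (by omega)
      have hpi := hcpos (i - 1) (by omega)
      have hpj := hcpos (j - 1) (by omega)
      simp only [hy] at he
      have hce : c (i - 1) = c (j - 1) :=
        hinj (Set.mem_Icc.2 ⟨by omega, by omega⟩) (Set.mem_Icc.2 ⟨by omega, by omega⟩) he
      rcases lt_trichotomy i j with h | h | h
      · have := hmono' (i - 1) (j - 1) (by omega) (by omega); omega
      · exact h
      · have := hmono' (j - 1) (i - 1) (by omega) (by omega); omega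
    have hperm : IsPermOn m (rankOf m y) := rankOf_perm hyinj
    set σ := rankOf m y with hσdef
    have hcont : Contains n X m σ := by
      refine ⟨fun i => c (i - 1), ?_, ?_, ?_⟩
      · intro i hi
        rw [Set.mem_Icc] at hi ⊢
        have hbi := hcbound (i - 1) (by omega)
        have hpi := hcpos (i - 1) (by omega)
        beta_reduce
        omega
      · intro i hi j hj hij
        rw [Set.mem_Icc] at hi hj
        have := hmono' (i - 1) (j - 1) (by omega) (by omega)
        beta_reduce
        omega
      · intro i hi j hj
        beta_reduce
        have := rankOf_lt hyinj hi hj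
        rw [hσdef, this]
    have hsimp : IsSimplePerm m σ := by
      intro p q hblkσ
      obtain ⟨hp1, hpq, hqm, e, hime⟩ := hblkσ
      by_contra hcon
      push_neg at hcon
      have hpltq : p < q := lt_of_le_of_ne hpq hcon.1
      have hcpq : c (p - 1) + 1 ≤ c q := by
        have := hmono' (p - 1) q (by omega) hqm
        omega
      have hbp := hcbound (p - 1) (by omega)
      have hbq := hcbound q hqm
      -- separation of block value-sets
      have hsep : ∀ iA iB, iA < m → iB < m → iA ≠ iB → ∀ x,
          x ∈ X '' Set.Icc (c iA) (c (iA + 1) - 1) →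
          x ∈ X '' Set.Icc (c iB) (c (iB + 1) - 1) → False := by
        rintro iA iB hA hB hne x ⟨u, hu, rfl⟩ ⟨u', hu', he⟩
        rw [Set.mem_Icc] at hu hu'
        have hbA := hcbound (iA + 1) (by omega)
        have hbB := hcbound (iB + 1) (by omega)
        have hbA' := hcbound iA (by omega)
        have hbB' := hcbound iB (by omega)
        have : u' = u :=
          hinj (Set.mem_Icc.2 ⟨by omega, by omega⟩) (Set.mem_Icc.2 ⟨by omega, by omega⟩) he
        subst this
        rcases lt_or_gt_of_ne hne with h | h
        · have := hmono' (iA + 1) iB (by omega) (by omega); omega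
        · have := hmono' (iB + 1) iA (by omega) (by omega); omega
      -- the union of blocks p..q is order-convex
      set U := X '' Set.Icc (c (p - 1)) (c q - 1) with hU
      have hconv : ∀ u v w, u ∈ U → w ∈ U → u ≤ v → v ≤ w → v ∈ U := by
        intro u v w hu hw huv hvw
        obtain ⟨t1, ht1, rfl⟩ := hu
        obtain ⟨t2, ht2, rfl⟩ := hw
        rcases eq_or_lt_of_le huv with he | hu1
        · exact ⟨t1, ht1, he⟩
        rcases eq_or_lt_of_le hvw with he | hw1
        · exact ⟨t2, ht2, he.symm⟩
        rw [Set.mem_Icc] at ht1 ht2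
        have ht1n : t1 ∈ Set.Icc 1 n := Set.mem_Icc.2 ⟨by omega, by omega⟩
        have ht2n : t2 ∈ Set.Icc 1 n := Set.mem_Icc.2 ⟨by omega, by omega⟩
        have hXt1 := Set.mem_Icc.1 (hX.1 ht1n)
        have hXt2 := Set.mem_Icc.1 (hX.1 ht2n)
        obtain ⟨t3, ht3, rfl⟩ := hX.2.2 (Set.mem_Icc.2 (by omega : 1 ≤ v ∧ v ≤ n))
        rw [Set.mem_Icc] at ht3
        -- locate the three points
        obtain ⟨i1, hi1m, hi1a, hi1b⟩ := seq_locate c m t1 (by omega) (by omega)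
        obtain ⟨i2, hi2m, hi2a, hi2b⟩ := seq_locate c m t2 (by omega) (by omega)
        obtain ⟨i3, hi3m, hi3a, hi3b⟩ := seq_locate c m t3 (by omega) (by omega)
        have hi1lo : p - 1 ≤ i1 := by
          by_contra hcc
          have := hmono' (i1 + 1) (p - 1) (by omega) (by omega); omega
        have hi1hi : i1 ≤ q - 1 := by
          by_contra hcc
          have := hmono' q i1 (by omega) (by omega); omega
        have hi2lo : p - 1 ≤ i2 := by
          by_contra hcc
          have := hmono' (i2 + 1) (p - 1) (by omega) (by omega); omega
        have hi2hi : i2 ≤ q - 1 := by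
          by_contra hcc
          have := hmono' q i2 (by omega) (by omega); omega
        suffices hi3rng : p - 1 ≤ i3 ∧ i3 ≤ q - 1 by
          have hlo := hmono' (p - 1) i3 (by omega) (by omega)
          have hhi := hmono' (i3 + 1) q (by omega) hqm
          exact ⟨t3, Set.mem_Icc.2 ⟨by omega, by omega⟩, rfl⟩
        by_cases h31 : i3 = i1
        · subst h31; omega
        by_cases h32 : i3 = i2
        · subst h32; omega
        -- value intervals
        obtain ⟨γ1, hγ1⟩ := isBlockOf_image (hblks i1 hi1m).1
        obtain ⟨γ2, hγ2⟩ := isBlockOf_image (hblks i2 hi2m).1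
        obtain ⟨γ3, hγ3⟩ := isBlockOf_image (hblks i3 hi3m).1
        set δ1 := γ1 + (c (i1 + 1) - 1 - c i1) with hδ1
        set δ2 := γ2 + (c (i2 + 1) - 1 - c i2) with hδ2
        set δ3 := γ3 + (c (i3 + 1) - 1 - c i3) with hδ3
        have hv1 : X t1 ∈ Set.Icc γ1 δ1 :=
          hγ1 ▸ Set.mem_image_of_mem X (Set.mem_Icc.2 ⟨by omega, by omega⟩)
        have hv2 : X t2 ∈ Set.Icc γ2 δ2 :=
          hγ2 ▸ Set.mem_image_of_mem X (Set.mem_Icc.2 ⟨by omega, by omega⟩)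
        have hv3 : X t3 ∈ Set.Icc γ3 δ3 :=
          hγ3 ▸ Set.mem_image_of_mem X (Set.mem_Icc.2 ⟨by omega, by omega⟩)
        rw [Set.mem_Icc] at hv1 hv2 hv3
        have hd13 : ¬(γ3 ≤ δ1 ∧ γ1 ≤ δ3) := by
          rintro ⟨ha', hb'⟩
          refine hsep i1 i3 hi1m hi3m (by omega) (max γ1 γ3) ?_ ?_
          · rw [hγ1]; exact Set.mem_Icc.2 ⟨by omega, by omega⟩
          · rw [hγ3]; exact Set.mem_Icc.2 ⟨by omega, by omega⟩
        have hd23 : ¬(γ3 ≤ δ2 ∧ γ2 ≤ δ3) := by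
          rintro ⟨ha', hb'⟩
          refine hsep i2 i3 hi2m hi3m (by omega) (max γ2 γ3) ?_ ?_
          · rw [hγ2]; exact Set.mem_Icc.2 ⟨by omega, by omega⟩
          · rw [hγ3]; exact Set.mem_Icc.2 ⟨by omega, by omega⟩
        have hsep13 : δ1 < γ3 := by omega
        have hsep32 : δ3 < γ2 := by omega
        -- representatives
        have hbi1 := hcbound (i1 + 1) (by omega)
        have hbi2 := hcbound (i2 + 1) (by omega)
        have hbi3 := hcbound (i3 + 1) (by omega)
        have hmono1 := hmono' i1 (i1 + 1) (by omega) (by omega)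
        have hmono2 := hmono' i2 (i2 + 1) (by omega) (by omega)
        have hmono3 := hmono' i3 (i3 + 1) (by omega) (by omega)
        have hr1 : X (c i1) ∈ Set.Icc γ1 δ1 :=
          hγ1 ▸ Set.mem_image_of_mem X (Set.mem_Icc.2 ⟨le_refl _, by omega⟩)
        have hr2 : X (c i2) ∈ Set.Icc γ2 δ2 :=
          hγ2 ▸ Set.mem_image_of_mem X (Set.mem_Icc.2 ⟨le_refl _, by omega⟩)
        have hr3 : X (c i3) ∈ Set.Icc γ3 δ3 :=
          hγ3 ▸ Set.mem_image_of_mem X (Set.mem_Icc.2 ⟨le_refl _, by omega⟩)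
        rw [Set.mem_Icc] at hr1 hr2 hr3
        -- σ comparisons
        have hy13 : y (i1 + 1) < y (i3 + 1) := by
          simp only [hy, Nat.add_sub_cancel]; omega
        have hy32 : y (i3 + 1) < y (i2 + 1) := by
          simp only [hy, Nat.add_sub_cancel]; omega
        have hmem1 : i1 + 1 ∈ Set.Icc 1 m := Set.mem_Icc.2 ⟨by omega, by omega⟩
        have hmem2 : i2 + 1 ∈ Set.Icc 1 m := Set.mem_Icc.2 ⟨by omega, by omega⟩
        have hmem3 : i3 + 1 ∈ Set.Icc 1 m := Set.mem_Icc.2 ⟨by omega, by omega⟩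
        have hσ13 : σ (i1 + 1) < σ (i3 + 1) := (rankOf_lt hyinj hmem1 hmem3).2 hy13
        have hσ32 : σ (i3 + 1) < σ (i2 + 1) := (rankOf_lt hyinj hmem3 hmem2).2 hy32
        have hσ1e : σ (i1 + 1) ∈ Set.Icc e (e + (q - p)) :=
          hime ▸ Set.mem_image_of_mem σ (Set.mem_Icc.2 ⟨by omega, by omega⟩)
        have hσ2e : σ (i2 + 1) ∈ Set.Icc e (e + (q - p)) :=
          hime ▸ Set.mem_image_of_mem σ (Set.mem_Icc.2 ⟨by omega, by omega⟩)
        rw [Set.mem_Icc] at hσ1e hσ2e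
        have hσ3e : σ (i3 + 1) ∈ Set.Icc e (e + (q - p)) := Set.mem_Icc.2 ⟨by omega, by omega⟩
        rw [← hime] at hσ3e
        obtain ⟨j', hj', hj'e⟩ := hσ3e
        rw [Set.mem_Icc] at hj'
        have hj'm : j' ∈ Set.Icc 1 m := Set.mem_Icc.2 ⟨by omega, by omega⟩
        have : j' = i3 + 1 := hperm.2.1 hj'm hmem3 hj'e
        omega
      have hfin : U.Finite := (Set.finite_Icc _ _).image X
      have hne : U.Nonempty :=
        ⟨X (c (p - 1)), Set.mem_image_of_mem X (Set.mem_Icc.2 ⟨le_refl _, by omega⟩)⟩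
      have hUeq := convex_eq_Icc U hfin hne hconv
      have hblkX : IsBlockOf n X (c (p - 1)) (c q - 1) :=
        isBlockOf_mk hinj (by omega) (by omega) (by omega) hUeq
      by_cases hprop : (c q - 1) + 1 < c (p - 1) + n
      · obtain ⟨-, h2⟩ := hinv (p - 1) (by omega) (c (p - 1)) (c q - 1)
          ⟨hblkX, hprop⟩ (le_refl _) (by omega)
        have he' : p - 1 + 1 = p := by omega
        rw [he'] at h2
        have := hmono' p q (by omega) hqm
        omega
      · have h1 : c (p - 1) = 1 ∧ c q = n + 1 := by omega
        have hp1' : p = 1 := by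
          by_contra hc
          have := hmono' 0 (p - 1) (by omega) (by omega)
          omega
        have hq' : q = m := by
          by_contra hc
          have := hcpos q (by omega)
          omega
        exact (hcon.2 hp1') hq'
    refine ⟨m, c, hm2, ?_, hc0, hcm, hmono, fun i hi => (hblks i hi).1⟩
    by_contra hmk
    exact H m (by omega) σ hperm hsimp hcont

lemma backward_decomposable (k : ℕ) (hk : 2 ≤ k) :
    ∀ n, 1 ≤ n → ∀ X : ℕ → ℕ, IsPermOn n X →
      (∀ l : ℕ, k + 1 ≤ l → ∀ σ : ℕ → ℕ, IsPermOn l σ → IsSimplePerm l σ → Avoids n X l σ) →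
      KDecomposable k n X := by
  intro n
  induction n using Nat.strong_induction_on with
  | _ n ih =>
    intro hn X hX H
    rcases eq_or_lt_of_le hn with h1 | h2
    · rw [← h1]
      exact KDecomposable.base X
    · obtain ⟨m, c, hm2, hmk, hc0, hcm, hmono, hblks⟩ := decomp_step h2 hk hX H
      refine KDecomposable.step n X m c hm2 hmk hc0 hcm hmono hblks ?_
      intro i hi
      have hb := hblks i hi
      have hstep := hmono i hi
      have hlen : c (i + 1) - c i = (c (i + 1) - 1) + 1 - c i := by omega
      have hperm := blockRestrict_perm hX hb
      have hmono2 := seq_mono c m hmono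
      have hlow : 1 + i ≤ c i := by
        have := hmono2 i 0 (by omega)
        rw [Nat.zero_add, hc0] at this
        omega
      have hhigh : c (i + 1) + (m - (i + 1)) ≤ n + 1 := by
        have := hmono2 (m - (i + 1)) (i + 1) (by omega)
        rw [show i + 1 + (m - (i + 1)) = m by omega, hcm] at this
        omega
      rw [hlen]
      apply ih ((c (i + 1) - 1) + 1 - c i) (by omega) (by omega) _ hperm
      intro l hl σ hσ hsimp hcontr
      exact H l hl σ hσ hsimp (contains_of_block_contains hb hcontr)

/-- For every permutation `X ∈ S_n` and integer `k ≥ 2`: `X` is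
`k`-decomposable iff `X` avoids every simple permutation of length at least `k+1`. -/
theorem kDecomposable_iff_avoids_simple (n k : ℕ) (hn : 1 ≤ n) (hk : 2 ≤ k)
    (X : ℕ → ℕ) (hX : IsPermOn n X) :
    KDecomposable k n X ↔
      ∀ l : ℕ, k + 1 ≤ l → ∀ σ : ℕ → ℕ, IsPermOn l σ → IsSimplePerm l σ →
        Avoids n X l σ := by
  constructor
  · intro hdec
    exact forward_avoids k hk n X hdec hX
  · intro H
    exact backward_decomposable k hk n hn X hX H
end
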